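/- arXiv:1501.00862 — 10 statements merged into one kernel-verified Lean document; each statement's English description precedes it below -/
import Mathlib

section
/- Let A be a finite-dimensional k-algebra with a k-linear involutive anti-automorphism τ, let I be a τ-invariant two-sided ideal of A, and let a ∈ A with a ∉ I. If the image ā of a in A/I is a τ-invariant idempotent, then there exists a τ-invariant idempotent e ∈ a·A·aᵗ with e + I = a + I; moreover e can be taken of the form p(a·aᵗ) for a polynomial p with p(0) = 0. -/
/-!
Put `b = a * τ a`: it is fixed by `τ` and congruent to `a` modulo `I`, so everything happens
in the commutative finite-dimensional algebra `k[b]`, on whose polynomials `τ` acts trivially.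
With `c = b * b - b ∈ I`, Fitting's lemma gives an idempotent `f ∈ c k[b]` such that `c (1 - f)`
is nilpotent. Then `b (1 - f) ≡ b` modulo `c` is idempotent up to a nilpotent, and the
standard lifting of idempotents along nil ideals produces an idempotent `e = b + y c`
with `y ∈ k[b]`, i.e. a polynomial in `b` without constant term.
-/

open Polynomial

section CommRing

variable {R : Type*} [CommRing R]

theorem pow_mul_mul_pow_eq_of_pow_succ_mul_eq {c y : R} {n : ℕ} (h : c ^ (n + 1) * y = c ^ n)
    (j : ℕ) : c ^ n * (c * y) ^ j = c ^ n := by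
  induction j with
  | zero => rw [pow_zero, mul_one]
  | succ j ih => rw [pow_succ', ← mul_assoc, ← mul_assoc, ← pow_succ, h, ih]

theorem exists_isIdempotentElem_mem_span_isNilpotent_mul_one_sub [IsArtinianRing R] (c : R) :
    ∃ f : R, IsIdempotentElem f ∧ f ∈ Ideal.span {c} ∧ IsNilpotent (c * (1 - f)) := by
  obtain ⟨n, y, hy⟩ := IsArtinian.exists_pow_succ_smul_dvd c (1 : R)
  have h : c ^ (n + 1 + 1) * y = c ^ (n + 1) := by
    rw [smul_eq_mul, smul_eq_mul, mul_one] at hy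
    rw [pow_succ', mul_assoc, hy, pow_succ']
  have hcf := pow_mul_mul_pow_eq_of_pow_succ_mul_eq h (n + 1)
  have hf : IsIdempotentElem ((c * y) ^ (n + 1)) := by
    calc (c * y) ^ (n + 1) * (c * y) ^ (n + 1)
        = y ^ (n + 1) * (c ^ (n + 1) * (c * y) ^ (n + 1)) := by rw [mul_pow c y]; ring
      _ = (c * y) ^ (n + 1) := by rw [hcf, mul_pow, mul_comm]
  refine ⟨_, hf, ?_, n + 1, ?_⟩
  · rw [pow_succ', mul_assoc]
    exact Ideal.mul_mem_right _ _ (Ideal.mem_span_singleton_self c)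
  · rw [mul_pow, hf.one_sub.pow_succ_eq, mul_sub, mul_one, hcf, sub_self]

theorem exists_isIdempotentElem_add_mul_mul_self_sub [IsArtinianRing R] (x : R) :
    ∃ y : R, IsIdempotentElem (x + y * (x * x - x)) := by
  obtain ⟨f, hf, hfc, m, hm⟩ :=
    exists_isIdempotentElem_mem_span_isNilpotent_mul_one_sub (x * x - x)
  set x' := x * (1 - f)
  have hx' : (x' - x' ^ 2) ^ (m + 1) = 0 := by
    have : x' - x' ^ 2 = -((x * x - x) * (1 - f)) := by
      have := hf.one_sub.eq
      linear_combination (-(x * x)) * this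
    rw [this, neg_pow, pow_succ ((x * x - x) * (1 - f)), hm, zero_mul, mul_zero]
  -- `x'` agrees with `x` modulo `x * x - x` and is idempotent up to a nilpotent
  set e := 1 - (1 - x' ^ (m + 1)) ^ (m + 1)
  suffices e - x ∈ Ideal.span {x * x - x} by
    obtain ⟨y, hy⟩ := Ideal.mem_span_singleton'.mp this
    refine ⟨y, ?_⟩
    rw [hy, add_sub_cancel]
    exact isIdempotentElem_one_sub_one_sub_pow_pow _ _ hx'
  set π := Ideal.Quotient.mk (Ideal.span {x * x - x})
  have hπx : IsIdempotentElem (π x) := by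
    rw [IsIdempotentElem, ← map_mul, Ideal.Quotient.eq]
    exact Ideal.mem_span_singleton_self _
  have hπx' : π x' = π x := by
    rw [map_mul, map_sub, map_one, Ideal.Quotient.eq_zero_iff_mem.mpr hfc, sub_zero, mul_one]
  rw [← Ideal.Quotient.eq, map_sub, map_one, map_pow, map_sub, map_one, map_pow, hπx',
    hπx.pow_succ_eq, hπx.one_sub.pow_succ_eq, sub_sub_cancel]

end CommRing

section Ideal

variable {A : Type*} [Ring A] {I : Ideal A}

theorem mul_sub_mem_of_mul_self_sub_mem {a a' : A} (ha : a * a - a ∈ I) (ha' : a' - a ∈ I) :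
    a * a' - a ∈ I := by
  have : a * a' - a = a * (a' - a) + (a * a - a) := by noncomm_ring
  rw [this]
  exact I.add_mem (I.mul_mem_left a ha') ha

theorem mul_self_sub_mem_of_sub_mem (hIright : ∀ x ∈ I, ∀ y : A, x * y ∈ I) {a b : A}
    (ha : a * a - a ∈ I) (hb : b - a ∈ I) : b * b - b ∈ I := by
  have : b * b - b = b * (b - a) + (b - a) * a + (a * a - a) - (b - a) := by noncomm_ring
  rw [this]
  exact I.sub_mem (I.add_mem (I.add_mem (I.mul_mem_left b hb) (hIright _ hb a)) ha) hb

end Ideal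

theorem map_one_of_involutive_of_antimul {A : Type*} [MulOneClass A] (τ : A → A)
    (hτ2 : ∀ x, τ (τ x) = x) (hτmul : ∀ x y, τ (x * y) = τ y * τ x) : τ 1 = 1 := by
  have h := hτmul (τ 1) 1
  rwa [mul_one, hτ2, mul_one, eq_comm] at h

theorem map_aeval_eq_self_of_antimul {k A : Type*} [CommSemiring k] [Semiring A] [Algebra k A]
    (τ : A →ₗ[k] A) (hτ1 : τ 1 = 1) (hτmul : ∀ x y : A, τ (x * y) = τ y * τ x)
    {b : A} (hb : τ b = b) (p : k[X]) : τ (aeval b p) = aeval b p := by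
  induction p using Polynomial.induction_on with
  | C r => rw [aeval_C, Algebra.algebraMap_eq_smul_one, map_smul, hτ1]
  | add p q hp hq => rw [map_add, map_add, hp, hq]
  | monomial n r ih =>
    rw [pow_succ, ← mul_assoc, map_mul, aeval_X, hτmul, hb, ih]
    simpa only [aeval_X] using ((Commute.all X (C r * X ^ n)).map (aeval b : k[X] →ₐ[k] A)).eq

theorem stmt1_general {k A : Type*} [Field k] [Ring A] [Algebra k A] [FiniteDimensional k A]
    (τ : A →ₗ[k] A)
    (hτ2 : ∀ x : A, τ (τ x) = x)
    (hτmul : ∀ x y : A, τ (x * y) = τ y * τ x)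
    (I : Ideal A)
    (hIright : ∀ x ∈ I, ∀ y : A, x * y ∈ I)
    (a : A)
    (hidem : a * a - a ∈ I)
    (hτa : τ a - a ∈ I) :
    ∃ e : A, (∃ x : A, e = a * x * τ a) ∧ e * e = e ∧ τ e = e ∧ e - a ∈ I ∧
      ∃ p : Polynomial k, p.coeff 0 = 0 ∧ e = Polynomial.aeval (a * τ a) p := by
  set b := a * τ a
  have hba : b - a ∈ I := mul_sub_mem_of_mul_self_sub_mem hidem hτa
  have : IsArtinianRing (Algebra.adjoin k {b}) := .of_finite k _
  set x : Algebra.adjoin k {b} := ⟨b, Algebra.self_mem_adjoin_singleton k b⟩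
  obtain ⟨y, hy⟩ := exists_isIdempotentElem_add_mul_mul_self_sub x
  obtain ⟨q, hq⟩ : (y : A) ∈ (aeval b : k[X] →ₐ[k] A).range :=
    Algebra.adjoin_singleton_eq_range_aeval k b ▸ y.2
  change aeval b q = y at hq
  have he : aeval b (X + q * (X * X - X)) = ((x + y * (x * x - x) : Algebra.adjoin k {b}) : A) := by
    simp [hq, x]
  -- the idempotent is `x * s` with `s = 1 + (x - 1) * y`, hence equals `(x * s) * (s * x)`
  have hxe : x + y * (x * x - x) = x * (1 + (x - 1) * y) ^ 2 * x := by
    linear_combination -hy.eq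
  refine ⟨aeval b (X + q * (X * X - X)),
    ⟨τ a * ((1 + (x - 1) * y) ^ 2 : Algebra.adjoin k {b}) * a, ?_⟩, ?_,
    map_aeval_eq_self_of_antimul τ (map_one_of_involutive_of_antimul τ hτ2 hτmul) hτmul
      (by rw [hτmul, hτ2]) _, ?_, X + q * (X * X - X), by simp, rfl⟩
  · rw [he, hxe]
    simp [x, b, mul_assoc]
  · rw [he]
    exact congrArg Subtype.val hy.eq
  · have : aeval b (X + q * (X * X - X)) - a = y * (b * b - b) + (b - a) := by
      rw [he]
      simp only [MulMemClass.mk_mul_mk, AddMemClass.coe_add, MulMemClass.coe_mul,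
        AddSubgroupClass.coe_sub, x]
      abel
    rw [this]
    exact I.add_mem (I.mul_mem_left _ (mul_self_sub_mem_of_sub_mem hIright hidem hba)) hba

/-- Lifting of τ-invariant idempotents along a quotient by a τ-invariant two-sided ideal:
if `ā` is a `τ`-invariant idempotent in `A/I`, there is a `τ`-invariant idempotent
`e ∈ a·A·τ(a)` with `e + I = a + I`, of the form `p(a·τ(a))` for a polynomial `p`
with `p(0) = 0`. -/
theorem stmt1 {k A : Type*} [Field k] [Ring A] [Algebra k A] [FiniteDimensional k A]
    (τ : A →ₗ[k] A)
    (hτ2 : ∀ x : A, τ (τ x) = x)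
    (hτmul : ∀ x y : A, τ (x * y) = τ y * τ x)
    (I : Ideal A)
    (hIright : ∀ x ∈ I, ∀ y : A, x * y ∈ I)
    (hτI : ∀ x ∈ I, τ x ∈ I)
    (a : A) (ha : a ∉ I)
    (hidem : a * a - a ∈ I)
    (hτa : τ a - a ∈ I) :
    ∃ e : A, (∃ x : A, e = a * x * τ a) ∧ e * e = e ∧ τ e = e ∧ e - a ∈ I ∧
      ∃ p : Polynomial k, p.coeff 0 = 0 ∧ e = Polynomial.aeval (a * τ a) p :=
  stmt1_general τ hτ2 hτmul I hIright a hidem hτa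
end

section
/- Let k be an algebraically closed field of characteristic 2 and let M be a finite-dimensional kG-module affording a non-degenerate G-invariant symmetric bilinear form B that is not symplectic (i.e. B(m,m) ≠ 0 for some m). Then M has a one-dimensional trivial submodule and a one-dimensional trivial quotient module. -/
/-- If `M` is a `kG`-module (char k = 2, k algebraically closed) with a non-degenerate
`G`-invariant symmetric bilinear form which is not symplectic, then `M` has a trivial
(one-dimensional fixed) submodule and a trivial quotient module. -/
theorem stmt2 {k G M : Type*} [Field k] [CharP k 2] [IsAlgClosed k] [Group G] [Finite G]
    [AddCommGroup M] [Module k M] [FiniteDimensional k M]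
    (ρ : Representation k G M)
    (B : M →ₗ[k] M →ₗ[k] k)
    (hsymm : ∀ m₁ m₂ : M, B m₁ m₂ = B m₂ m₁)
    (hnd : ∀ m : M, (∀ m' : M, B m m' = 0) → m = 0)
    (hinv : ∀ (g : G) (m₁ m₂ : M), B (ρ g m₁) (ρ g m₂) = B m₁ m₂)
    (hnotsymp : ∃ m : M, B m m ≠ 0) :
    (∃ m : M, m ≠ 0 ∧ ∀ g : G, ρ g m = m) ∧
    (∃ f : M →ₗ[k] k, f ≠ 0 ∧ ∀ (g : G) (m : M), f (ρ g m) = f m) := by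
  haveI : Fact (Nat.Prime 2) := ⟨Nat.prime_two⟩
  -- inverse of Frobenius
  let e : k ≃+* k := frobeniusEquiv k 2
  -- the quadratic form m ↦ B m m is Frobenius-semilinear; take square roots
  have hQ_add : ∀ m₁ m₂ : M, B (m₁ + m₂) (m₁ + m₂) = B m₁ m₁ + B m₂ m₂ := by
    intro m₁ m₂
    have h2 : B m₁ m₂ + B m₂ m₁ = 0 := by
      rw [hsymm m₁ m₂]; exact CharTwo.add_self_eq_zero _
    simp only [map_add, LinearMap.add_apply]
    linear_combination h2
  have hQ_smul : ∀ (c : k) (m : M), B (c • m) (c • m) = c ^ 2 * B m m := by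
    intro c m
    simp [LinearMap.map_smul, smul_smul, pow_two, mul_assoc]
  -- define f m = e.symm (B m m)
  have he : ∀ c : k, e.symm (c ^ 2) = c := by
    intro c
    exact (frobeniusEquiv k 2).symm_apply_apply c
  let f : M →ₗ[k] k :=
    { toFun := fun m => e.symm (B m m)
      map_add' := by
        intro m₁ m₂
        show e.symm (B (m₁ + m₂) (m₁ + m₂)) = e.symm (B m₁ m₁) + e.symm (B m₂ m₂)
        rw [hQ_add, map_add]
      map_smul' := by
        intro c m
        show e.symm (B (c • m) (c • m)) = c * e.symm (B m m)
        rw [hQ_smul, map_mul, he] }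
  have hf_apply : ∀ m : M, f m = e.symm (B m m) := fun _ => rfl
  have hfinv : ∀ (g : G) (m : M), f (ρ g m) = f m := by
    intro g m
    rw [hf_apply, hf_apply, hinv]
  have hfne : f ≠ 0 := by
    obtain ⟨m, hm⟩ := hnotsymp
    intro h
    apply hm
    have : f m = 0 := by rw [h]; rfl
    rw [hf_apply] at this
    exact (map_eq_zero_iff _ e.symm.injective).mp this
  refine ⟨?_, ⟨f, hfne, hfinv⟩⟩
  -- B : M →ₗ Dual is bijective
  have hinj : Function.Injective B := by
    intro m₁ m₂ h
    have : ∀ m', B (m₁ - m₂) m' = 0 := by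
      intro m'
      simp [map_sub, h]
    have := hnd _ this
    exact sub_eq_zero.mp this
  have hsurj : Function.Surjective B := by
    rw [← LinearMap.injective_iff_surjective_of_finrank_eq_finrank
      (Subspace.dual_finrank_eq (K := k) (V := M)).symm]
    exact hinj
  obtain ⟨m₀, hm₀⟩ := hsurj f
  refine ⟨m₀, ?_, ?_⟩
  · intro h
    apply hfne
    rw [← hm₀, h, map_zero]
  · intro g
    have key : ∀ m' : M, B (ρ g m₀) m' = B m₀ m' := by
      intro m'
      have h1 : B (ρ g m₀) (ρ g (ρ g⁻¹ m')) = B m₀ (ρ g⁻¹ m') := hinv g m₀ _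
      have h2 : ρ g (ρ g⁻¹ m') = m' := by
        rw [← Module.End.mul_apply, ← map_mul, mul_inv_cancel, map_one]
        rfl
      rw [h2] at h1
      rw [h1, hm₀]
      have : f (ρ g⁻¹ m') = f m' := hfinv g⁻¹ m'
      rw [this, ← hm₀]
    have : ∀ m' : M, B (ρ g m₀ - m₀) m' = 0 := by
      intro m'
      simp [map_sub, key m']
    have := hnd _ this
    exact sub_eq_zero.mp this
end

section
/- Let M be a kG-module with non-degenerate G-invariant symmetric bilinear form B and adjoint σ. For θ ∈ End_{kG}(M), the pairing B̂_θ : θ(M) × σ(θ)(M) → k given by B̂_θ(θ m₁, σ(θ) m₂) = B(θ m₁, m₂) is well-defined and is a perfect G-pairing; in particular σ(θ)(M) is isomorphic to the dual module (θ M)* as kG-modules. -/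
/-- For `θ ∈ E_G(M)`, the pairing `B̂_θ(θm₁, σθ m₂) = B(θm₁, m₂)` on `θ(M) × (σθ)(M)` is
well-defined, `G`-invariant and perfect; in particular `(σθ)(M)` is `kG`-isomorphic to the
dual of `θ(M)` (with the contragredient action). -/
theorem stmt5 {k G M : Type*} [Field k] [Group G]
    [AddCommGroup M] [Module k M] [FiniteDimensional k M]
    (ρ : Representation k G M)
    (B : M →ₗ[k] M →ₗ[k] k)
    (hsymm : ∀ m₁ m₂ : M, B m₁ m₂ = B m₂ m₁)
    (hnd : ∀ m : M, (∀ m' : M, B m m' = 0) → m = 0)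
    (hinv : ∀ (g : G) (m₁ m₂ : M), B (ρ g m₁) (ρ g m₂) = B m₁ m₂)
    (σ : (M →ₗ[k] M) → (M →ₗ[k] M))
    (hσ : ∀ (f : M →ₗ[k] M) (m₁ m₂ : M), B m₁ (f m₂) = B (σ f m₁) m₂)
    (θ : M →ₗ[k] M)
    (hθG : ∀ g : G, θ ∘ₗ (ρ g : M →ₗ[k] M) = (ρ g : M →ₗ[k] M) ∘ₗ θ) :
    -- the pairing is well-defined
    (∀ m₁ m₁' m₂ m₂' : M, θ m₁ = θ m₁' → σ θ m₂ = σ θ m₂' →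
        B (θ m₁) m₂ = B (θ m₁') m₂') ∧
    -- the pairing is G-invariant
    (∀ (g : G) (m₁ m₂ : M), B (θ (ρ g m₁)) (ρ g m₂) = B (θ m₁) m₂) ∧
    -- the pairing is perfect (non-degenerate on the right; left non-degeneracy is that of B)
    (∀ m₂ : M, (∀ m₁ : M, B (θ m₁) m₂ = 0) → σ θ m₂ = 0) ∧
    -- consequently (σθ)(M) ≅ (θ(M))* as kG-modules
    (∃ φ : ↥(LinearMap.range (σ θ)) ≃ₗ[k] (↥(LinearMap.range θ) →ₗ[k] k),
      (∀ m₁ m₂ : M,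
        φ ⟨σ θ m₂, LinearMap.mem_range_self (σ θ) m₂⟩ ⟨θ m₁, LinearMap.mem_range_self θ m₁⟩ =
          B (θ m₁) m₂) ∧
      (∀ (g : G) (m₂ m₁ : M) (h : ρ g (σ θ m₂) ∈ LinearMap.range (σ θ))
          (h' : ρ g⁻¹ (θ m₁) ∈ LinearMap.range θ),
        φ ⟨ρ g (σ θ m₂), h⟩ ⟨θ m₁, LinearMap.mem_range_self θ m₁⟩ =
          φ ⟨σ θ m₂, LinearMap.mem_range_self (σ θ) m₂⟩ ⟨ρ g⁻¹ (θ m₁), h'⟩)) := by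
  classical
  -- key reformulation
  have key : ∀ m₁ m₂ : M, B (θ m₁) m₂ = B m₁ (σ θ m₂) := by
    intro m₁ m₂
    rw [hsymm (θ m₁) m₂, hσ θ m₂ m₁, hsymm]
  have wd : ∀ m₁ m₁' m₂ m₂' : M, θ m₁ = θ m₁' → σ θ m₂ = σ θ m₂' →
      B (θ m₁) m₂ = B (θ m₁') m₂' := by
    intro m₁ m₁' m₂ m₂' h1 h2
    rw [h1, key, h2, ← key]
  have Ginv : ∀ (g : G) (m₁ m₂ : M), B (θ (ρ g m₁)) (ρ g m₂) = B (θ m₁) m₂ := by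
    intro g m₁ m₂
    have : θ (ρ g m₁) = ρ g (θ m₁) := LinearMap.congr_fun (hθG g) m₁
    rw [this, hinv]
  have perf : ∀ m₂ : M, (∀ m₁ : M, B (θ m₁) m₂ = 0) → σ θ m₂ = 0 := by
    intro m₂ h
    refine hnd _ fun m' => ?_
    rw [hsymm, ← key, h]
  refine ⟨wd, Ginv, perf, ?_⟩
  -- σθ commutes with ρ g
  have hgg : ∀ (g : G) (x : M), ρ g (ρ g⁻¹ x) = x := by
    intro g x
    rw [← Module.End.mul_apply, ← map_mul, mul_inv_cancel, map_one, Module.End.one_apply]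
  have hσθG : ∀ (g : G) (m : M), σ θ (ρ g m) = ρ g (σ θ m) := by
    intro g m
    rw [← sub_eq_zero]
    refine hnd _ fun m' => ?_
    rw [hsymm, map_sub, sub_eq_zero, hsymm m' _, hsymm m' _]
    have h1 : B (σ θ (ρ g m)) m' = B (ρ g m) (θ m') := (hσ θ (ρ g m) m').symm
    have h2 : B (ρ g (σ θ m)) m' = B (σ θ m) (ρ g⁻¹ m') := by
      conv_lhs => rw [show m' = ρ g (ρ g⁻¹ m') from (hgg g m').symm]
      rw [hinv]
    rw [h1, h2, ← hσ θ m (ρ g⁻¹ m'), show θ (ρ g⁻¹ m') = ρ g⁻¹ (θ m') from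
      LinearMap.congr_fun (hθG g⁻¹) m', ← hinv g m (ρ g⁻¹ (θ m')), hgg g (θ m')]
  -- the linear map ψ : M → (range θ)* , ψ m₂ x = B x m₂
  set ψ : M →ₗ[k] (↥(LinearMap.range θ) →ₗ[k] k) := (B.domRestrict (LinearMap.range θ)).flip
    with hψ
  have ψ_apply : ∀ (m₂ : M) (x : ↥(LinearMap.range θ)), ψ m₂ x = B (x : M) m₂ := fun _ _ => rfl
  have hle : LinearMap.ker (σ θ) ≤ LinearMap.ker ψ := by
    intro m₂ hm₂
    rw [LinearMap.mem_ker] at hm₂ ⊢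
    ext x
    obtain ⟨m₁, hm₁⟩ := x.2
    simp only [LinearMap.zero_apply]
    rw [ψ_apply, ← hm₁, key, hm₂, map_zero]
  set φ' : ↥(LinearMap.range (σ θ)) →ₗ[k] (↥(LinearMap.range θ) →ₗ[k] k) :=
    (Submodule.liftQ _ ψ hle) ∘ₗ ((σ θ).quotKerEquivRange.symm :
      ↥(LinearMap.range (σ θ)) →ₗ[k] M ⧸ LinearMap.ker (σ θ)) with hφ'
  have φ'_apply : ∀ (m₂ : M) (h : σ θ m₂ ∈ LinearMap.range (σ θ)),
      φ' ⟨σ θ m₂, h⟩ = ψ m₂ := by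
    intro m₂ h
    simp only [hφ', LinearMap.comp_apply, LinearEquiv.coe_coe,
      LinearMap.quotKerEquivRange_symm_apply_image, Submodule.mkQ_apply, Submodule.liftQ_apply]
  have φ'_inj : Function.Injective φ' := by
    rw [← LinearMap.ker_eq_bot, LinearMap.ker_eq_bot']
    intro y hy
    obtain ⟨m₂, hm₂⟩ := y.2
    have hy' : φ' ⟨σ θ m₂, LinearMap.mem_range_self _ m₂⟩ = 0 := by
      rw [show (⟨σ θ m₂, LinearMap.mem_range_self _ m₂⟩ : ↥(LinearMap.range (σ θ))) = y from
        Subtype.ext hm₂, hy]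
    rw [φ'_apply] at hy'
    have : σ θ m₂ = 0 := perf m₂ fun m₁ => by
      have := LinearMap.congr_fun hy' ⟨θ m₁, LinearMap.mem_range_self θ m₁⟩
      rwa [ψ_apply] at this
    exact Subtype.ext (by rw [← hm₂, this]; rfl)
  -- dimension count: b : M ≃ Dual via B, conjugating σθ to dualMap θ
  have hBinj : Function.Injective B := by
    rw [← LinearMap.ker_eq_bot, LinearMap.ker_eq_bot']
    intro m hm
    exact hnd m fun m' => by rw [show B m = 0 from hm]; rfl
  let e : M ≃ₗ[k] Module.Dual k M :=
    B.linearEquivOfInjective hBinj Subspace.dual_finrank_eq.symm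
  have he : ∀ m, e m = B m := fun m => LinearMap.linearEquivOfInjective_apply _ _ m
  have hconj : (e : M →ₗ[k] Module.Dual k M) ∘ₗ (σ θ) = θ.dualMap ∘ₗ (e : M →ₗ[k] Module.Dual k M) := by
    ext m m'
    simp only [LinearMap.comp_apply, LinearEquiv.coe_coe, he, LinearMap.dualMap_apply]
    rw [← hσ]
  have hrank : Module.finrank k ↥(LinearMap.range (σ θ)) =
      Module.finrank k ↥(LinearMap.range θ) := by
    have h1 : (LinearMap.range (σ θ)).map (e : M →ₗ[k] Module.Dual k M) =
        LinearMap.range θ.dualMap := by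
      rw [← LinearMap.range_comp, hconj, LinearMap.range_comp, LinearEquiv.range,
        Submodule.map_top]
    calc Module.finrank k ↥(LinearMap.range (σ θ))
        = Module.finrank k ↥((LinearMap.range (σ θ)).map (e : M →ₗ[k] Module.Dual k M)) :=
          (LinearEquiv.finrank_map_eq e _).symm
      _ = Module.finrank k ↥(LinearMap.range θ.dualMap) := by rw [h1]
      _ = Module.finrank k ↥(LinearMap.range θ) :=
          LinearMap.finrank_range_dualMap_eq_finrank_range θ
  have hdim : Module.finrank k ↥(LinearMap.range (σ θ)) =
      Module.finrank k (↥(LinearMap.range θ) →ₗ[k] k) := by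
    rw [hrank]
    exact Subspace.dual_finrank_eq.symm
  let φ : ↥(LinearMap.range (σ θ)) ≃ₗ[k] (↥(LinearMap.range θ) →ₗ[k] k) :=
    φ'.linearEquivOfInjective φ'_inj hdim
  have hφapp : ∀ y, φ y = φ' y := fun y => LinearMap.linearEquivOfInjective_apply _ _ y
  have prop1 : ∀ m₁ m₂ : M,
      φ ⟨σ θ m₂, LinearMap.mem_range_self (σ θ) m₂⟩ ⟨θ m₁, LinearMap.mem_range_self θ m₁⟩ =
        B (θ m₁) m₂ := by
    intro m₁ m₂
    rw [hφapp, φ'_apply, ψ_apply]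
  refine ⟨φ, prop1, ?_⟩
  intro g m₂ m₁ h h'
  have e1 : (⟨ρ g (σ θ m₂), h⟩ : ↥(LinearMap.range (σ θ))) =
      ⟨σ θ (ρ g m₂), LinearMap.mem_range_self _ _⟩ := Subtype.ext (hσθG g m₂).symm
  have e2 : (⟨ρ g⁻¹ (θ m₁), h'⟩ : ↥(LinearMap.range θ)) =
      ⟨θ (ρ g⁻¹ m₁), LinearMap.mem_range_self _ _⟩ :=
    Subtype.ext (LinearMap.congr_fun (hθG g⁻¹) m₁).symm
  rw [e1, e2, prop1, prop1, ← hinv g (θ (ρ g⁻¹ m₁)) m₂,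
    show ρ g (θ (ρ g⁻¹ m₁)) = θ (ρ g (ρ g⁻¹ m₁)) from (LinearMap.congr_fun (hθG g) _).symm,
    hgg g m₁]
end

section
/- Let k have characteristic 2, M a finite-dimensional k-vector space with non-degenerate symmetric bilinear form B and adjoint involution σ on End(M). Then the natural projection GL(M) → PGL(M) restricts to a group isomorphism from the isometry group GL(M,B) onto the centralizer PGL(M,σ) of σ in PGL(M). In particular, every projective representation G → PGL(M,σ) of a finite group G lifts uniquely to a representation G → GL(M,B). -/
/-!
If `g` centralizes `σ` in `PGL(M)`, then `A = σ(g) ∘ g`, which satisfies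
`B (A x) y = B (g x) (g y)`, commutes with every `σ f`, hence (as `σ` is an involution) with all
of `End(M)`; so `A` is a scalar `μ`, and rescaling `g` by a square root of `μ⁻¹` makes it an
isometry. Two isometries differing by a scalar `c` force `c ^ 2 = 1`, i.e. `c = 1` in
characteristic 2. Hence every projective class in `PGL(M,σ)` contains exactly one isometry, and
choosing it along a projective representation is automatically multiplicative.
-/

section

variable {k M : Type*} [Field k] [AddCommGroup M] [Module k M]

/-- `a` and `b` have the same image in `PGL(M)`. -/
def ProjectivelyEq (a b : M ≃ₗ[k] M) : Prop :=
  ∃ c : k, c ≠ 0 ∧ ∀ m, b m = c • a m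

namespace ProjectivelyEq

variable {a b c a' b' : M ≃ₗ[k] M}

theorem symm (h : ProjectivelyEq a b) : ProjectivelyEq b a := by
  obtain ⟨c, hc, h⟩ := h
  exact ⟨c⁻¹, inv_ne_zero hc, fun m => by rw [h, inv_smul_smul₀ hc]⟩

theorem trans (h₁ : ProjectivelyEq a b) (h₂ : ProjectivelyEq b c) : ProjectivelyEq a c := by
  obtain ⟨c₁, hc₁, h₁⟩ := h₁
  obtain ⟨c₂, hc₂, h₂⟩ := h₂
  exact ⟨c₂ * c₁, mul_ne_zero hc₂ hc₁, fun m => by rw [h₂, h₁, smul_smul]⟩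

theorem mul (ha : ProjectivelyEq a a') (hb : ProjectivelyEq b b') :
    ProjectivelyEq (a * b) (a' * b') := by
  obtain ⟨c₁, hc₁, ha⟩ := ha
  obtain ⟨c₂, hc₂, hb⟩ := hb
  refine ⟨c₁ * c₂, mul_ne_zero hc₁ hc₂, fun m => ?_⟩
  rw [LinearEquiv.mul_apply, LinearEquiv.mul_apply, hb, map_smul, ha, smul_smul, mul_comm]

end ProjectivelyEq

theorem exists_unique_monoidHom_lift {G : Type*} [Group G] (P : (M ≃ₗ[k] M) → Prop)
    (hPmul : ∀ a b, P a → P b → P (a * b))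
    (hPinj : ∀ a b, P a → P b → ProjectivelyEq a b → a = b)
    (ρ : G → M ≃ₗ[k] M) (hρ : ∀ g h, ProjectivelyEq (ρ g * ρ h) (ρ (g * h)))
    (hρP : ∀ g, ∃ a, P a ∧ ProjectivelyEq (ρ g) a) :
    ∃! ρ' : G →* (M ≃ₗ[k] M), (∀ g, P (ρ' g)) ∧ ∀ g, ProjectivelyEq (ρ g) (ρ' g) := by
  choose a haP hρa using hρP
  have ha_mul : ∀ g h, a (g * h) = a g * a h := fun g h =>
    (hPinj _ _ (hPmul _ _ (haP g) (haP h)) (haP (g * h))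
      ((((hρa g).mul (hρa h)).symm.trans (hρ g h)).trans (hρa (g * h)))).symm
  refine ⟨MonoidHom.mk' a ha_mul, ⟨haP, hρa⟩, fun ρ' ⟨hρ'P, hρρ'⟩ => MonoidHom.ext fun g => ?_⟩
  exact (hPinj _ _ (haP g) (hρ'P g) ((hρa g).symm.trans (hρρ' g))).symm

theorem LinearMap.SeparatingLeft.injective {B : M →ₗ[k] M →ₗ[k] k} (hB : B.SeparatingLeft) :
    Function.Injective B :=
  LinearMap.ker_eq_bot.mp (LinearMap.separatingLeft_iff_ker_eq_bot.mp hB)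

section AdjointInvolution

variable {B : M →ₗ[k] M →ₗ[k] k} {σ : Module.End k M → Module.End k M}

theorem adjoint_adjoint (hsymm : ∀ x y, B x y = B y x) (hB : B.SeparatingLeft)
    (hσ : ∀ f x y, B x (f y) = B (σ f x) y) (f : Module.End k M) : σ (σ f) = f :=
  LinearMap.ext fun x => hB.injective <| LinearMap.ext fun y => by
    rw [← hσ, hsymm, ← hσ, hsymm]

theorem exists_similitude_of_commute_adjoint (hsymm : ∀ x y, B x y = B y x)
    (hB : B.SeparatingLeft) (hσ : ∀ f x y, B x (f y) = B (σ f x) y) (g : M ≃ₗ[k] M)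
    (hg : ∀ f : Module.End k M,
      σ ((g : Module.End k M) ∘ₗ f ∘ₗ (g.symm : Module.End k M)) =
        (g : Module.End k M) ∘ₗ σ f ∘ₗ (g.symm : Module.End k M)) :
    ∃ c : k, ∀ x y, B (g x) (g y) = c * B x y := by
  set A := σ g ∘ₗ (g : Module.End k M)
  have hA : ∀ x y, B (A x) y = B (g x) (g y) := fun x y => (hσ g (g x) y).symm
  have hA_adjoint : ∀ f x, A (σ f x) = σ f (A x) := fun f x =>
    hB.injective <| LinearMap.ext fun y => by
      have hgf : g (f y) = ((g : Module.End k M) ∘ₗ f ∘ₗ (g.symm : Module.End k M)) (g y) := by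
        simp
      rw [hA, ← hσ, hA, hgf, hσ, hg]
      simp
  have hA_central : A ∈ Subalgebra.center k (Module.End k M) :=
    Subalgebra.mem_center_iff.mpr fun f => LinearMap.ext fun x => by
      simpa [adjoint_adjoint hsymm hB hσ] using (hA_adjoint (σ f) x).symm
  obtain ⟨c, hc⟩ := (Algebra.IsCentral.mem_center_iff k).mp hA_central
  exact ⟨c, fun x y => by rw [← hA, hc]; simp⟩

theorem eq_of_isometry_of_projectivelyEq [CharP k 2] (hB : B.SeparatingLeft) {g₁ g₂ : M ≃ₗ[k] M}
    (h₁ : ∀ x y, B (g₁ x) (g₁ y) = B x y) (h₂ : ∀ x y, B (g₂ x) (g₂ y) = B x y)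
    (h : ProjectivelyEq g₁ g₂) : g₁ = g₂ := by
  obtain ⟨c, -, hc⟩ := h
  have hsq : ∀ x : M, (c - 1) ^ 2 • x = 0 := fun x => hB _ fun y => by
    have hxy := h₂ x y
    simp only [hc, map_smul, LinearMap.smul_apply, smul_eq_mul, h₁] at hxy
    rw [map_smul, LinearMap.smul_apply, smul_eq_mul]
    -- in characteristic 2, `(c - 1) ^ 2 = c ^ 2 - 1`
    linear_combination hxy + (B x y - c * B x y) * CharTwo.two_eq_zero (R := k)
  have hc1 : ∀ x : M, (c - 1) • x = 0 := fun x => by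
    rcases smul_eq_zero.mp (hsq x) with h | h
    · rw [pow_eq_zero_iff two_ne_zero] at h; rw [h, zero_smul]
    · rw [h, smul_zero]
  refine LinearEquiv.ext fun x => ?_
  have hfix := hc1 (g₁ x)
  rw [sub_smul, one_smul, sub_eq_zero] at hfix
  rw [hc, hfix]

theorem exists_smul_isometry_of_commute_adjoint [IsAlgClosed k] (hsymm : ∀ x y, B x y = B y x)
    (hB : B.SeparatingLeft) (hσ : ∀ f x y, B x (f y) = B (σ f x) y) (g : M ≃ₗ[k] M)
    (hg : ∀ f : Module.End k M,
      σ ((g : Module.End k M) ∘ₗ f ∘ₗ (g.symm : Module.End k M)) =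
        (g : Module.End k M) ∘ₗ σ f ∘ₗ (g.symm : Module.End k M)) :
    ∃ c : k, c ≠ 0 ∧ ∀ x y, B (c • g x) (c • g y) = B x y := by
  rcases subsingleton_or_nontrivial M with hM | hM
  · exact ⟨1, one_ne_zero, fun x y => by simp [Subsingleton.elim x 0]⟩
  obtain ⟨μ, hμ⟩ := exists_similitude_of_commute_adjoint hsymm hB hσ g hg
  have hμ0 : μ ≠ 0 := by
    rintro rfl
    obtain ⟨x, hx⟩ := exists_ne (0 : M)
    refine hx (g.map_eq_zero_iff.mp (hB _ fun y => ?_))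
    simpa using hμ x (g.symm y)
  obtain ⟨c, hc⟩ := IsAlgClosed.exists_eq_mul_self μ⁻¹
  have hc0 : c ≠ 0 := by
    rintro rfl
    exact inv_ne_zero hμ0 (by simpa using hc)
  refine ⟨c, hc0, fun x y => ?_⟩
  calc B (c • g x) (c • g y) = (c * c * μ) * B x y := by
        simp only [map_smul, LinearMap.smul_apply, smul_eq_mul, hμ]
        ring
    _ = B x y := by rw [← hc, inv_mul_cancel₀ hμ0, one_mul]

theorem exists_isometry_projectivelyEq_of_commute_adjoint [IsAlgClosed k]
    (hsymm : ∀ x y, B x y = B y x) (hB : B.SeparatingLeft)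
    (hσ : ∀ f x y, B x (f y) = B (σ f x) y) (g : M ≃ₗ[k] M)
    (hg : ∀ f : Module.End k M,
      σ ((g : Module.End k M) ∘ₗ f ∘ₗ (g.symm : Module.End k M)) =
        (g : Module.End k M) ∘ₗ σ f ∘ₗ (g.symm : Module.End k M)) :
    ∃ a : M ≃ₗ[k] M, (∀ x y, B (a x) (a y) = B x y) ∧ ProjectivelyEq g a := by
  obtain ⟨c, hc, hcg⟩ := exists_smul_isometry_of_commute_adjoint hsymm hB hσ g hg
  exact ⟨g.trans (LinearEquiv.smulOfNeZero k M c hc), hcg, c, hc, fun _ => rfl⟩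

end AdjointInvolution

end

theorem stmt7_general {k M G : Type*} [Field k] [CharP k 2] [IsAlgClosed k]
    [AddCommGroup M] [Module k M] [Group G]
    (B : M →ₗ[k] M →ₗ[k] k)
    (hsymm : ∀ m₁ m₂ : M, B m₁ m₂ = B m₂ m₁)
    (hnd : ∀ m : M, (∀ m' : M, B m m' = 0) → m = 0)
    (σ : (M →ₗ[k] M) → (M →ₗ[k] M))
    (hσ : ∀ (f : M →ₗ[k] M) (m₁ m₂ : M), B m₁ (f m₂) = B (σ f m₁) m₂) :
    -- injectivity: two isometries inducing the same element of PGL(M) are equal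
    (∀ g₁ g₂ : M ≃ₗ[k] M,
      (∀ m₁ m₂ : M, B (g₁ m₁) (g₁ m₂) = B m₁ m₂) →
      (∀ m₁ m₂ : M, B (g₂ m₁) (g₂ m₂) = B m₁ m₂) →
      (∃ c : k, c ≠ 0 ∧ ∀ m : M, g₂ m = c • g₁ m) → g₁ = g₂) ∧
    -- surjectivity onto the centralizer of σ in PGL(M)
    (∀ g : M ≃ₗ[k] M,
      (∀ f : M →ₗ[k] M,
        σ ((g : M →ₗ[k] M) ∘ₗ f ∘ₗ (g.symm : M →ₗ[k] M)) =
          (g : M →ₗ[k] M) ∘ₗ σ f ∘ₗ (g.symm : M →ₗ[k] M)) →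
      ∃ c : k, c ≠ 0 ∧ ∀ m₁ m₂ : M, B (c • g m₁) (c • g m₂) = B m₁ m₂) ∧
    -- unique lifting of projective representations into PGL(M,σ)
    (∀ ρ : G → M ≃ₗ[k] M,
      (∀ g h : G, ∃ c : k, c ≠ 0 ∧ ∀ m : M, ρ (g * h) m = c • ρ g (ρ h m)) →
      (∀ (g : G) (f : M →ₗ[k] M),
        σ ((ρ g : M →ₗ[k] M) ∘ₗ f ∘ₗ ((ρ g).symm : M →ₗ[k] M)) =
          (ρ g : M →ₗ[k] M) ∘ₗ σ f ∘ₗ ((ρ g).symm : M →ₗ[k] M)) →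
      ∃! ρ' : G →* (M ≃ₗ[k] M),
        (∀ (g : G) (m₁ m₂ : M), B (ρ' g m₁) (ρ' g m₂) = B m₁ m₂) ∧
        (∀ g : G, ∃ c : k, c ≠ 0 ∧ ∀ m : M, ρ' g m = c • ρ g m)) := by
  have hinj : ∀ g₁ g₂ : M ≃ₗ[k] M, (∀ x y, B (g₁ x) (g₁ y) = B x y) →
      (∀ x y, B (g₂ x) (g₂ y) = B x y) → ProjectivelyEq g₁ g₂ → g₁ = g₂ :=
    fun _ _ => eq_of_isometry_of_projectivelyEq hnd
  refine ⟨hinj, exists_smul_isometry_of_commute_adjoint hsymm hnd hσ, fun ρ hρ hρσ => ?_⟩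
  exact exists_unique_monoidHom_lift (fun a => ∀ x y, B (a x) (a y) = B x y)
    (fun a b ha hb x y => (ha (b x) (b y)).trans (hb x y)) hinj ρ hρ
    fun g => exists_isometry_projectivelyEq_of_commute_adjoint hsymm hnd hσ (ρ g) (hρσ g)

/-- In characteristic 2, the projection `GL(M) → PGL(M)` restricts to an isomorphism from
the isometry group `GL(M,B)` onto the centralizer `PGL(M,σ)` of the adjoint involution `σ`
(acting on `PGL(M) = Aut(End M)` by conjugation); in particular every projective
representation `G → PGL(M,σ)` of a finite group lifts uniquely to a representation
`G → GL(M,B)`. -/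
theorem stmt7 {k M G : Type*} [Field k] [CharP k 2] [IsAlgClosed k]
    [AddCommGroup M] [Module k M] [FiniteDimensional k M] [Group G] [Finite G]
    (B : M →ₗ[k] M →ₗ[k] k)
    (hsymm : ∀ m₁ m₂ : M, B m₁ m₂ = B m₂ m₁)
    (hnd : ∀ m : M, (∀ m' : M, B m m' = 0) → m = 0)
    (σ : (M →ₗ[k] M) → (M →ₗ[k] M))
    (hσ : ∀ (f : M →ₗ[k] M) (m₁ m₂ : M), B m₁ (f m₂) = B (σ f m₁) m₂) :
    -- injectivity: two isometries inducing the same element of PGL(M) are equal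
    (∀ g₁ g₂ : M ≃ₗ[k] M,
      (∀ m₁ m₂ : M, B (g₁ m₁) (g₁ m₂) = B m₁ m₂) →
      (∀ m₁ m₂ : M, B (g₂ m₁) (g₂ m₂) = B m₁ m₂) →
      (∃ c : k, c ≠ 0 ∧ ∀ m : M, g₂ m = c • g₁ m) → g₁ = g₂) ∧
    -- surjectivity onto the centralizer of σ in PGL(M)
    (∀ g : M ≃ₗ[k] M,
      (∀ f : M →ₗ[k] M,
        σ ((g : M →ₗ[k] M) ∘ₗ f ∘ₗ (g.symm : M →ₗ[k] M)) =
          (g : M →ₗ[k] M) ∘ₗ σ f ∘ₗ (g.symm : M →ₗ[k] M)) →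
      ∃ c : k, c ≠ 0 ∧ ∀ m₁ m₂ : M, B (c • g m₁) (c • g m₂) = B m₁ m₂) ∧
    -- unique lifting of projective representations into PGL(M,σ)
    (∀ ρ : G → M ≃ₗ[k] M,
      (∀ g h : G, ∃ c : k, c ≠ 0 ∧ ∀ m : M, ρ (g * h) m = c • ρ g (ρ h m)) →
      (∀ (g : G) (f : M →ₗ[k] M),
        σ ((ρ g : M →ₗ[k] M) ∘ₗ f ∘ₗ ((ρ g).symm : M →ₗ[k] M)) =
          (ρ g : M →ₗ[k] M) ∘ₗ σ f ∘ₗ ((ρ g).symm : M →ₗ[k] M)) →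
      ∃! ρ' : G →* (M ≃ₗ[k] M),
        (∀ (g : G) (m₁ m₂ : M), B (ρ' g m₁) (ρ' g m₂) = B m₁ m₂) ∧
        (∀ g : G, ∃ c : k, c ≠ 0 ∧ ∀ m : M, ρ' g m = c • ρ g m)) :=
  stmt7_general B hsymm hnd σ hσ
end

section
/- Let k be an algebraically closed field of characteristic 2 and M a non-trivial self-dual irreducible kG-module. Then M affords a non-degenerate G-invariant symplectic bilinear form, unique up to a non-zero scalar multiple. -/
open Module

/-- Schur-type uniqueness: two nondegenerate invariant bilinear forms on an irreducible
module over an algebraically closed field differ by a nonzero scalar. -/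
theorem fong_aux_unique {k G M : Type*} [Field k] [IsAlgClosed k] [Group G]
    [AddCommGroup M] [Module k M] [FiniteDimensional k M] [Nontrivial M]
    (ρ : Representation k G M)
    (hirr : ∀ N : Submodule k M, (∀ g : G, ∀ m ∈ N, ρ g m ∈ N) → N = ⊥ ∨ N = ⊤)
    (B B' : M →ₗ[k] M →ₗ[k] k)
    (hBnd : ∀ m : M, (∀ m' : M, B m m' = 0) → m = 0)
    (hBinv : ∀ (g : G) (m₁ m₂ : M), B (ρ g m₁) (ρ g m₂) = B m₁ m₂)
    (hB'nd : ∀ m : M, (∀ m' : M, B' m m' = 0) → m = 0)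
    (hB'inv : ∀ (g : G) (m₁ m₂ : M), B' (ρ g m₁) (ρ g m₂) = B' m₁ m₂) :
    ∃ c : k, c ≠ 0 ∧ B' = c • B := by
  classical
  have hρ : ∀ (g : G) (x : M), ρ g (ρ g⁻¹ x) = x := by
    intro g x
    rw [← Module.End.mul_apply, ← map_mul, mul_inv_cancel, map_one, Module.End.one_apply]
  have hBinj : Function.Injective B := by
    rw [← LinearMap.ker_eq_bot]
    rw [Submodule.eq_bot_iff]
    intro m hm
    exact hBnd m fun m' => by
      rw [LinearMap.mem_ker] at hm; rw [hm]; rfl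
  have hBsurj : Function.Surjective B :=
    (LinearMap.injective_iff_surjective_of_finrank_eq_finrank
      (Subspace.dual_finrank_eq (K := k) (V := M)).symm).mp hBinj
  let φ : M ≃ₗ[k] (M →ₗ[k] k) := LinearEquiv.ofBijective B ⟨hBinj, hBsurj⟩
  let f : M →ₗ[k] M := φ.symm.toLinearMap ∘ₗ B'
  have hf : ∀ m : M, B (f m) = B' m := by
    intro m
    show φ (φ.symm (B' m)) = B' m
    exact φ.apply_symm_apply _
  have hcomm : ∀ (g : G) (m : M), f (ρ g m) = ρ g (f m) := by
    intro g m
    apply hBinj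
    rw [hf]
    ext m'
    have h1 : B' (ρ g m) m' = B' m (ρ g⁻¹ m') := by
      conv_lhs => rw [← hρ g m']
      rw [hB'inv]
    have h2 : B (ρ g (f m)) m' = B (f m) (ρ g⁻¹ m') := by
      conv_lhs => rw [← hρ g m']
      rw [hBinv]
    rw [h1, h2, hf]
  obtain ⟨μ, hμ⟩ := Module.End.exists_eigenvalue f
  have hNinv : ∀ g : G, ∀ m ∈ Module.End.eigenspace f μ, ρ g m ∈ Module.End.eigenspace f μ := by
    intro g m hm
    rw [Module.End.mem_eigenspace_iff] at hm ⊢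
    rw [hcomm, hm, map_smul]
  have heig : Module.End.eigenspace f μ = ⊤ := by
    rcases hirr (Module.End.eigenspace f μ) hNinv with h | h
    · exact absurd h (Module.End.hasEigenvalue_iff.mp hμ)
    · exact h
  have hfm : ∀ m : M, f m = μ • m := by
    intro m
    exact Module.End.mem_eigenspace_iff.mp (heig ▸ Submodule.mem_top)
  have hB'B : B' = μ • B := by
    ext m m'
    rw [← hf m, hfm m, map_smul]
    rfl
  refine ⟨μ, ?_, hB'B⟩
  intro hμ0
  obtain ⟨m, hm⟩ := exists_ne (0 : M)
  apply hm
  apply hB'nd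
  intro m'
  rw [hB'B, hμ0]
  simp

/-- Fong's Lemma: a non-trivial self-dual irreducible module over an algebraically closed
field of characteristic 2 affords a non-degenerate `G`-invariant symplectic bilinear form,
unique up to a non-zero scalar. -/
theorem stmt10 {k G M : Type*} [Field k] [CharP k 2] [IsAlgClosed k] [Group G] [Finite G]
    [AddCommGroup M] [Module k M] [FiniteDimensional k M] [Nontrivial M]
    (ρ : Representation k G M)
    -- M is irreducible
    (hirr : ∀ N : Submodule k M, (∀ g : G, ∀ m ∈ N, ρ g m ∈ N) → N = ⊥ ∨ N = ⊤)
    -- M is non-trivial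
    (hnontriv : ∃ (g : G) (m : M), ρ g m ≠ m)
    -- M is self-dual: it affords a non-degenerate G-invariant bilinear form
    (hselfdual : ∃ C : M →ₗ[k] M →ₗ[k] k,
      (∀ m : M, (∀ m' : M, C m m' = 0) → m = 0) ∧
      (∀ (g : G) (m₁ m₂ : M), C (ρ g m₁) (ρ g m₂) = C m₁ m₂)) :
    ∃ B : M →ₗ[k] M →ₗ[k] k,
      (∀ m : M, B m m = 0) ∧
      (∀ m : M, (∀ m' : M, B m m' = 0) → m = 0) ∧
      (∀ (g : G) (m₁ m₂ : M), B (ρ g m₁) (ρ g m₂) = B m₁ m₂) ∧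
      ∀ B' : M →ₗ[k] M →ₗ[k] k,
        (∀ m : M, B' m m = 0) →
        (∀ m : M, (∀ m' : M, B' m m' = 0) → m = 0) →
        (∀ (g : G) (m₁ m₂ : M), B' (ρ g m₁) (ρ g m₂) = B' m₁ m₂) →
        ∃ c : k, c ≠ 0 ∧ B' = c • B := by
  classical
  obtain ⟨C, hCnd, hCinv⟩ := hselfdual
  haveI : Fact (Nat.Prime 2) := ⟨Nat.prime_two⟩
  have hρ : ∀ (g : G) (x : M), ρ g (ρ g⁻¹ x) = x := by
    intro g x
    rw [← Module.End.mul_apply, ← map_mul, mul_inv_cancel, map_one, Module.End.one_apply]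
  -- It suffices to find an alternating nondegenerate invariant form.
  suffices h : ∃ B : M →ₗ[k] M →ₗ[k] k,
      (∀ m : M, B m m = 0) ∧
      (∀ m : M, (∀ m' : M, B m m' = 0) → m = 0) ∧
      (∀ (g : G) (m₁ m₂ : M), B (ρ g m₁) (ρ g m₂) = B m₁ m₂) by
    obtain ⟨B, halt, hnd, hinv⟩ := h
    exact ⟨B, halt, hnd, hinv, fun B' _ hB'nd hB'inv =>
      fong_aux_unique ρ hirr B B' hnd hinv hB'nd hB'inv⟩
  set S : M →ₗ[k] M →ₗ[k] k := C + C.flip with hSdef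
  have hSapp : ∀ m m' : M, S m m' = C m m' + C m' m := fun m m' => rfl
  by_cases hS : S = 0
  · -- `C` is symmetric; use the square root of the associated quadratic form.
    have hsymm : ∀ m m' : M, C m' m = C m m' := by
      intro m m'
      have h0 : C m m' + C m' m = 0 := by
        have : S m m' = 0 := by rw [hS]; simp
        rwa [hSapp] at this
      have h1 : -(C m m') = C m m' := CharTwo.neg_eq (R := k) (C m m')
      linear_combination h0 + h1
    let e := (frobeniusEquiv k 2).symm
    have heinj : Function.Injective e := (frobeniusEquiv k 2).symm.injective
    let L : M →ₗ[k] k :=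
      { toFun := fun m => e (C m m)
        map_add' := by
          intro m m'
          have hexp : C (m + m') (m + m') = C m m + C m m' + C m' m + C m' m' := by
            simp only [map_add, LinearMap.add_apply]
            ring
          have hself : C m m' + C m m' = 0 := CharTwo.add_self_eq_zero _
          have hq : C (m + m') (m + m') = C m m + C m' m' := by
            linear_combination hexp + hsymm m m' + hself
          show e _ = e _ + e _
          rw [hq, map_add]
        map_smul' := by
          intro c m
          have hq : C (c • m) (c • m) = c ^ 2 * C m m := by
            simp only [map_smul, LinearMap.smul_apply, smul_eq_mul]
            ring
          show e _ = c * e _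
          calc e (C (c • m) (c • m)) = e (frobeniusEquiv k 2 c * C m m) := by
                rw [hq, frobeniusEquiv_def]
            _ = e (frobeniusEquiv k 2 c) * e (C m m) := by rw [map_mul]
            _ = c * e (C m m) := by rw [RingEquiv.symm_apply_apply] }
    have hLinv : ∀ (g : G) (m : M), L (ρ g m) = L m := by
      intro g m
      show e (C (ρ g m) (ρ g m)) = e (C m m)
      rw [hCinv]
    by_cases hL : L = 0
    · -- `C` is itself alternating.
      refine ⟨C, ?_, hCnd, hCinv⟩
      intro m
      have h0 : e (C m m) = e 0 := by
        have : L m = 0 := by rw [hL]; simp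
        rw [show L m = e (C m m) from rfl] at this
        rw [this, map_zero]
      exact heinj h0
    · -- impossible: `ker L` would be a proper invariant submodule forcing `ρ` trivial.
      exfalso
      have hNinv : ∀ g : G, ∀ m ∈ LinearMap.ker L, ρ g m ∈ LinearMap.ker L := by
        intro g m hm
        rw [LinearMap.mem_ker] at hm ⊢
        rw [hLinv, hm]
      have hker : LinearMap.ker L = ⊥ := by
        rcases hirr (LinearMap.ker L) hNinv with h | h
        · exact h
        · exact absurd (LinearMap.ker_eq_top.mp h) hL
      have hLinj : Function.Injective L := LinearMap.ker_eq_bot.mp hker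
      obtain ⟨g, m, hgm⟩ := hnontriv
      exact hgm (hLinj (hLinv g m))
  · -- `S` is a nonzero alternating invariant form, hence nondegenerate by irreducibility.
    have halt : ∀ m : M, S m m = 0 := fun m => by
      rw [hSapp]; exact CharTwo.add_self_eq_zero _
    have hinv : ∀ (g : G) (m₁ m₂ : M), S (ρ g m₁) (ρ g m₂) = S m₁ m₂ := by
      intro g m₁ m₂
      rw [hSapp, hSapp, hCinv, hCinv]
    refine ⟨S, halt, ?_, hinv⟩
    have hNinv : ∀ g : G, ∀ m ∈ LinearMap.ker S, ρ g m ∈ LinearMap.ker S := by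
      intro g m hm
      rw [LinearMap.mem_ker] at hm ⊢
      ext m'
      have h2 : S (ρ g m) m' = S m (ρ g⁻¹ m') := by
        conv_lhs => rw [← hρ g m']
        rw [hinv]
      rw [LinearMap.zero_apply, h2, hm]
      rfl
    have hker : LinearMap.ker S = ⊥ := by
      rcases hirr (LinearMap.ker S) hNinv with h | h
      · exact h
      · exact absurd (LinearMap.ker_eq_top.mp h) hS
    intro m hm
    have h1 : S m = 0 := LinearMap.ext hm
    have h2 : m ∈ LinearMap.ker S := h1
    rwa [hker, Submodule.mem_bot] at h2
end

section
/- Let k have characteristic 2 and equip kG with the G-invariant bilinear form B_t(x,y) = B₁(xt, y), where B₁ makes the group elements an orthonormal basis and t ∈ G is an involution. Two involutions s, t ∈ G are conjugate in G if and only if there exists x ∈ kG with B_t(x, sx) ≠ 0. Equivalently, B_t(x, sx) = Σ_{g ∈ G, g = sgt} x_g², where x = Σ x_g g. -/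
/-!
Substituting `g ↦ g t` turns `B_t(x, sx)` into `∑_g x_g x_{sgt}`. The map `g ↦ sgt` is an
involution, so in characteristic 2 the terms of each two-element orbit cancel and only the
fixed points survive, each contributing `x_g²`. A fixed point `g = sgt` is exactly a `g` with
`g t g⁻¹ = s`.
-/

open Finset MonoidAlgebra

theorem sum_mul_comp_involutive_eq_sum_fixed_sq {ι R : Type*} [Fintype ι] [DecidableEq ι]
    [CommSemiring R] [CharP R 2] {φ : ι → ι} (hφ : Function.Involutive φ) (f : ι → R) :
    ∑ i, f i * f (φ i) = ∑ i ∈ univ.filter (fun i => i = φ i), f i ^ 2 := by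
  rw [← sum_filter_add_sum_filter_not univ (fun i => i = φ i)]
  have hfixed : ∑ i ∈ univ.filter (fun i => i = φ i), f i * f (φ i) =
      ∑ i ∈ univ.filter (fun i => i = φ i), f i ^ 2 :=
    sum_congr rfl fun i hi => by rw [← (mem_filter.1 hi).2, sq]
  have hmoved : ∑ i ∈ univ.filter (fun i => ¬i = φ i), f i * f (φ i) = 0 := by
    refine sum_involution (fun i _ => φ i) (fun i _ => ?_) (fun i hi _ => ?_)
      (fun i hi => ?_) (fun i _ => hφ i)
    · rw [hφ i, mul_comm, CharTwo.add_self_eq_zero]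
    · exact Ne.symm (mem_filter.1 hi).2
    · simpa [hφ i, eq_comm] using hi
  rw [hfixed, hmoved, add_zero]

theorem MonoidAlgebra.sum_coeff_mul_of_mul_coeff_of_mul {R G : Type*} [CommSemiring R] [Group G]
    [Fintype G] (x : MonoidAlgebra R G) (s t : G) :
    ∑ g, (x * of R G t).coeff g * (of R G s * x).coeff g =
      ∑ g, x.coeff g * x.coeff (s⁻¹ * g * t) := by
  refine Fintype.sum_equiv (Equiv.mulRight t⁻¹) _ _ fun g => ?_
  simp [mul_comm, mul_assoc]

theorem mul_mul_inv_eq_iff_eq_mul_mul {G : Type*} [Group G] {g s t : G} (ht : t * t = 1) :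
    g * t * g⁻¹ = s ↔ g = s * g * t := by
  rw [mul_inv_eq_iff_eq_mul, ← eq_mul_inv_iff_mul_eq, inv_eq_of_mul_eq_one_right ht]

theorem stmt12_general {k G : Type*} [Field k] [CharP k 2] [Group G] [Fintype G] [DecidableEq G]
    (s t : G) (hs : s * s = 1) (ht : t * t = 1) :
    ((∃ g : G, g * t * g⁻¹ = s) ↔
      ∃ x : MonoidAlgebra k G,
        (∑ g : G, (x * MonoidAlgebra.of k G t).coeff g * ((MonoidAlgebra.of k G s) * x).coeff g) ≠ 0) ∧
    (∀ x : MonoidAlgebra k G,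
      (∑ g : G, (x * MonoidAlgebra.of k G t).coeff g * ((MonoidAlgebra.of k G s) * x).coeff g) =
        ∑ g ∈ Finset.univ.filter (fun g : G => g = s * g * t), (x.coeff g) ^ 2) := by
  have hφ : Function.Involutive fun g : G => s * g * t := fun g => by
    simp only [mul_assoc, ht, mul_one, ← mul_assoc s s, hs, one_mul]
  have hB (x : MonoidAlgebra k G) :
      ∑ g, (x * of k G t).coeff g * (of k G s * x).coeff g =
        ∑ g ∈ univ.filter (fun g : G => g = s * g * t), x.coeff g ^ 2 := by
    rw [sum_coeff_mul_of_mul_coeff_of_mul, inv_eq_of_mul_eq_one_right hs]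
    exact sum_mul_comp_involutive_eq_sum_fixed_sq hφ x.coeff
  refine ⟨⟨?_, ?_⟩, hB⟩
  · rintro ⟨g, hg⟩
    have hfix : g ∈ univ.filter (fun g : G => g = s * g * t) :=
      mem_filter.2 ⟨mem_univ g, (mul_mul_inv_eq_iff_eq_mul_mul ht).1 hg⟩
    refine ⟨single g 1, ?_⟩
    rw [hB, sum_eq_single_of_mem g hfix fun h _ hh => by simp [coeff_single, hh]]
    simp [coeff_single]
  · rintro ⟨x, hx⟩
    obtain ⟨g, hg, -⟩ := exists_ne_zero_of_sum_ne_zero (hB x ▸ hx)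
    exact ⟨g, (mul_mul_inv_eq_iff_eq_mul_mul ht).2 (mem_filter.1 hg).2⟩

/-- Two involutions `s, t ∈ G` are conjugate iff `B_t(x, sx) ≠ 0` for some `x ∈ kG`, where
`B_t(x,y) = B₁(xt, y)` and `B₁` makes the group elements orthonormal; moreover
`B_t(x, sx) = ∑_{g = sgt} x_g²`. -/
theorem stmt12 {k G : Type*} [Field k] [CharP k 2] [Group G] [Fintype G] [DecidableEq G]
    (s t : G) (hs : s * s = 1) (hs1 : s ≠ 1) (ht : t * t = 1) (ht1 : t ≠ 1) :
    ((∃ g : G, g * t * g⁻¹ = s) ↔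
      ∃ x : MonoidAlgebra k G,
        (∑ g : G, (x * MonoidAlgebra.of k G t).coeff g * ((MonoidAlgebra.of k G s) * x).coeff g) ≠ 0) ∧
    (∀ x : MonoidAlgebra k G,
      (∑ g : G, (x * MonoidAlgebra.of k G t).coeff g * ((MonoidAlgebra.of k G s) * x).coeff g) =
        ∑ g ∈ Finset.univ.filter (fun g : G => g = s * g * t), (x.coeff g) ^ 2) :=
  stmt12_general s t hs ht
end

section
/- Let k have characteristic 2, G a finite group, H ≤ G, and a a unit of kH with a° = a. Then the induced symmetric kG-module Ind_H^G(kH, B_a) is isomorphic (isometrically, as kG-modules) to (kG, B_a). In particular, for each involution t ∈ G, (kG, B_t) ≅ Ind_{⟨t⟩}^G(k⟨t⟩, B_t). -/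
/-- The contragredient map of a group algebra. -/
noncomputable def contra14 (k G : Type*) [Field k] [Group G] :
    MonoidAlgebra k G →ₗ[k] MonoidAlgebra k G :=
  MonoidAlgebra.mapDomainLinearMap k k (fun g : G => g⁻¹)

/-- Inclusion of `kH` into `kG`. -/
noncomputable def incl14 {k : Type*} {G : Type*} [Field k] [Group G] (H : Subgroup G)
    (x : MonoidAlgebra k ↥H) : MonoidAlgebra k G :=
  MonoidAlgebra.ofCoeff (Finsupp.mapDomain ((↑) : ↥H → G) x.coeff)

/-- The induced-module condition for functions `G → kH`, where `H` acts on `kH` by left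
multiplication. -/
def IndCond14 {k : Type*} {G : Type*} [Field k] [Group G] (H : Subgroup G)
    (f : G → MonoidAlgebra k ↥H) : Prop :=
  ∀ (h : H) (g : G), f (g * (h : G)) = MonoidAlgebra.of k ↥H h⁻¹ * f g

/-!
Read `x ∈ kG` off on each left coset: `Φ x : g ↦ ∑_{h ∈ H} x(gh) h`. This map commutes with
right multiplication by `kH ⊆ kG`, i.e. `Φ x g * a = Φ (x a) g`, so on coset representatives
the induced form becomes `∑_{c ∈ G/H} ∑_{h ∈ H} (x a)(c h) y(c h)`, which is `B_a(x, y)` because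
`G` is the disjoint union of the cosets `c H`.
-/

namespace MonoidAlgebra

variable {k G : Type*} [Group G] (H : Subgroup G)

section Semiring

variable [Semiring k]

noncomputable def toInduced : MonoidAlgebra k G →ₗ[k] (G → MonoidAlgebra k H) :=
  LinearMap.pi fun g => (coeffLinearEquiv k).symm.toLinearMap ∘ₗ
    Finsupp.lcomapDomain (fun h : H => g * h)
      ((mul_right_injective g).comp Subtype.val_injective) ∘ₗ (coeffLinearEquiv k).toLinearMap

@[simp]
lemma coeff_toInduced (x : MonoidAlgebra k G) (g : G) (h : H) :
    (toInduced H x g).coeff h = x.coeff (g * h) := rfl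

lemma toInduced_injective : Function.Injective (toInduced (k := k) H) := by
  intro x y hxy
  ext g
  simpa using congr_arg (fun f => (f g).coeff 1) hxy

lemma toInduced_of_mul (g : G) (x : MonoidAlgebra k G) :
    toInduced H (of k G g * x) = fun y => toInduced H x (g⁻¹ * y) := by
  ext y h
  simp [of_apply, mul_assoc]

end Semiring

variable [Field k]

lemma indCond_toInduced (x : MonoidAlgebra k G) : IndCond14 H (toInduced H x) := by
  intro h g
  ext h'
  simp [of_apply, mul_assoc]

lemma exists_toInduced_eq [Finite G] (f : G → MonoidAlgebra k H) (hf : IndCond14 H f) :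
    ∃ x, toInduced H x = f := by
  refine ⟨ofCoeff (Finsupp.equivFunOnFinite.symm fun g => (f g).coeff 1), ?_⟩
  ext g h
  simp [hf h g, of_apply]

lemma toInduced_mul_incl (x : MonoidAlgebra k G) (a : MonoidAlgebra k H) (g : G) :
    toInduced H x g * a = toInduced H (x * incl14 H a) g := by
  ext h
  rw [coeff_toInduced, coeff_mul_apply_right, coeff_mul_apply_right, incl14, coeff_ofCoeff,
    Finsupp.sum_mapDomain_index (by simp) (by simp [mul_add])]
  simp [mul_assoc]

end MonoidAlgebra

lemma QuotientGroup.sum_out_mul {G M : Type*} [Group G] [AddCommMonoid M] [Fintype G]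
    (H : Subgroup G) [Fintype H] [Fintype (G ⧸ H)] (F : G → M) :
    ∑ c : G ⧸ H, ∑ h : H, F (c.out * h) = ∑ g, F g := by
  rw [← Fintype.sum_prod_type']
  exact Fintype.sum_equiv ((Equiv.prodComm _ _).trans
    ((Equiv.prodCongr (Equiv.refl H) (Equiv.Set.univ _).symm).trans
      ((preimageMkEquivSubgroupProdSet H Set.univ).symm.trans (Equiv.Set.univ G)))) _ _
    fun _ => rfl

theorem stmt14_general {k G : Type*} [Field k] [Group G] [Fintype G]
    (H : Subgroup G) [Fintype ↥H] [Fintype (G ⧸ H)]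
    (a : MonoidAlgebra k ↥H) :
    ∃ Φ : MonoidAlgebra k G →ₗ[k] (G → MonoidAlgebra k ↥H),
      -- lands in the induced module
      (∀ x : MonoidAlgebra k G, IndCond14 H (Φ x)) ∧
      -- bijectively
      Function.Injective Φ ∧
      (∀ f : G → MonoidAlgebra k ↥H, IndCond14 H f → ∃ x, Φ x = f) ∧
      -- kG-linearly
      (∀ (g : G) (x : MonoidAlgebra k G),
        Φ (MonoidAlgebra.of k G g * x) = fun y : G => Φ x (g⁻¹ * y)) ∧
      -- isometrically from B_a on kG to the induced form B_a^G
      (∀ x y : MonoidAlgebra k G,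
        (∑ c : G ⧸ H, ∑ h : ↥H, ((Φ x (Quotient.out c)) * a).coeff h * (Φ y (Quotient.out c)).coeff h) =
          ∑ g : G, (x * incl14 H a).coeff g * y.coeff g) := by
  refine ⟨MonoidAlgebra.toInduced H, MonoidAlgebra.indCond_toInduced H,
    MonoidAlgebra.toInduced_injective H, MonoidAlgebra.exists_toInduced_eq H,
    MonoidAlgebra.toInduced_of_mul H, fun x y => ?_⟩
  simp_rw [MonoidAlgebra.toInduced_mul_incl, MonoidAlgebra.coeff_toInduced]
  exact QuotientGroup.sum_out_mul H fun g => (x * incl14 H a).coeff g * y.coeff g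

/-- For a symmetric unit `a = a°` of `kH` (char 2), induction of the symmetric module
`(kH, B_a)` from `H` to `G` gives `(kG, B_a)`: there is a `kG`-linear bijection of `kG`
onto the induced module which is an isometry from `B_a` on `kG` to the induced form
`B_a^G`. -/
theorem stmt14 {k G : Type*} [Field k] [CharP k 2] [Group G] [Fintype G]
    (H : Subgroup G) [Fintype ↥H] [Fintype (G ⧸ H)]
    (a : MonoidAlgebra k ↥H) (haunit : IsUnit a) (hao : contra14 k ↥H a = a) :
    ∃ Φ : MonoidAlgebra k G →ₗ[k] (G → MonoidAlgebra k ↥H),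
      -- lands in the induced module
      (∀ x : MonoidAlgebra k G, IndCond14 H (Φ x)) ∧
      -- bijectively
      Function.Injective Φ ∧
      (∀ f : G → MonoidAlgebra k ↥H, IndCond14 H f → ∃ x, Φ x = f) ∧
      -- kG-linearly
      (∀ (g : G) (x : MonoidAlgebra k G),
        Φ (MonoidAlgebra.of k G g * x) = fun y : G => Φ x (g⁻¹ * y)) ∧
      -- isometrically from B_a on kG to the induced form B_a^G
      (∀ x y : MonoidAlgebra k G,
        (∑ c : G ⧸ H, ∑ h : ↥H, ((Φ x (Quotient.out c)) * a).coeff h * (Φ y (Quotient.out c)).coeff h) =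
          ∑ g : G, (x * incl14 H a).coeff g * y.coeff g) :=
  stmt14_general H a
end

section
/- Let k have characteristic 2 and consider the involutary G-algebra (End(kG), σ) with σ the adjoint of B₁. A k-basis of the σ-invariant elements of E_G(kG) ≅ kG^{op} is given by r(1), r(t₁),…,r(t_m), r(g₁+g₁⁻¹),…,r(g_n+g_n⁻¹), where t₁,…,t_m are the involutions of G and {g_j, g_j⁻¹} run over the pairs of non-involutive non-identity elements. The elements r(1) and r(g_j+g_j⁻¹) lie in the image of tr₁^G applied to σ-invariant elements of End(kG); and r(t_i) = tr_{⟨t_i⟩}^G(t_i⊗1 + 1⊗t_i) with t_i⊗1 + 1⊗t_i being σ-invariant. -/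
open scoped Classical

/-- The contragredient map of a group algebra. -/
noncomputable def contra16 (k G : Type*) [Field k] [Group G] :
    MonoidAlgebra k G →ₗ[k] MonoidAlgebra k G :=
  MonoidAlgebra.mapDomainLinearMap k k (fun g : G => g⁻¹)

/-- The rank-one endomorphism `x ⊗ y` of `kG`: `z ↦ B₁(y, z) • x`. -/
noncomputable def rankOne16 {k G : Type*} [Field k] [Group G] [Fintype G]
    (x y : MonoidAlgebra k G) : MonoidAlgebra k G →ₗ[k] MonoidAlgebra k G where
  toFun z := (∑ g : G, y.coeff g * z.coeff g) • x
  map_add' z z' := by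
    have h : ∀ g : G, (z + z').coeff g = z.coeff g + z'.coeff g := fun g => rfl
    simp [h, mul_add, Finset.sum_add_distrib, add_smul]
  map_smul' c z := by
    have h : ∀ g : G, (c • z).coeff g = c * z.coeff g := fun g => rfl
    simp [h, smul_smul, Finset.mul_sum, mul_left_comm]


/-!
A `G`-endomorphism `f` of `kG` is the right multiplication `r(a)` by `a = f 1`. Writing `a*` for
the contragredient (`contra16`), `B₁(u, v a) = B₁(u a*, v)`, so `σ (r a) = r a*` and the
`σ`-invariant elements of `E_G(kG)` are the `r(a)` with `a` constant on the classes `{g, g⁻¹}`;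
the indicators of these classes are `1`, `tᵢ` and `gⱼ + gⱼ⁻¹`.

Left translations preserve `B₁`, so conjugation by `g` sends `x ⊗ y` to `gx ⊗ gy`, and summing
over `G` gives `tr₁^G (x ⊗ y) = r(y* x)`; also `σ (x ⊗ y) = y ⊗ x`. For an involution `t`,
`t ⊗ 1` and `1 ⊗ t` are the two `⟨t⟩`-conjugates of `t ⊗ 1`, whence
`tr_{⟨t⟩}^G (t ⊗ 1 + 1 ⊗ t) = tr₁^G (t ⊗ 1) = r(t)`.
-/

open MonoidAlgebra

section Pairing

variable {k G : Type*} [Semiring k] [Group G] [Fintype G]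

lemma dotProduct_coeff_of (u : MonoidAlgebra k G) (h : G) :
    u.coeff ⬝ᵥ (of k G h).coeff = u.coeff h := by
  simp [dotProduct, of_apply, Finsupp.single_apply]

lemma dotProduct_coeff_of_mul (g : G) (u v : MonoidAlgebra k G) :
    (of k G g * u).coeff ⬝ᵥ (of k G g * v).coeff = u.coeff ⬝ᵥ v.coeff :=
  Fintype.sum_equiv (Equiv.mulLeft g⁻¹) _ _ fun h => by simp [of_apply]

end Pairing

section Contragredient

variable {k G : Type*} [Field k] [Group G]

lemma contra16_single (g : G) (c : k) : contra16 k G (single g c) = single g⁻¹ c :=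
  mapDomainLinearMap_single ..

lemma contra16_of (g : G) : contra16 k G (of k G g) = of k G g⁻¹ :=
  contra16_single g 1

lemma coeff_contra16 (a : MonoidAlgebra k G) (g : G) :
    (contra16 k G a).coeff g = a.coeff g⁻¹ := by
  simpa [contra16, coeff_mapDomainLinearMap] using
    Finsupp.mapDomain_apply inv_injective a.coeff g⁻¹

lemma contra16_one : contra16 k G 1 = 1 := by
  rw [one_def, contra16_single, inv_one]

lemma contra16_contra16 (a : MonoidAlgebra k G) :
    contra16 k G (contra16 k G a) = a :=
  MonoidAlgebra.ext <| Finsupp.ext fun g => by rw [coeff_contra16, coeff_contra16, inv_inv]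

lemma dotProduct_coeff_mul_right [Fintype G] (u v a : MonoidAlgebra k G) :
    u.coeff ⬝ᵥ (v * a).coeff = (u * contra16 k G a).coeff ⬝ᵥ v.coeff := by
  induction a using MonoidAlgebra.induction_linear with
  | zero => simp
  | add a b ha hb =>
    simp only [mul_add, map_add, coeff_add, Finsupp.coe_add, dotProduct_add, add_dotProduct, ha, hb]
  | single g c =>
    rw [contra16_single]
    exact Fintype.sum_equiv (Equiv.mulRight g⁻¹) _ _ fun h => by simp [mul_assoc, mul_comm c]

end Contragredient

lemma rankOne16_apply {k G : Type*} [Field k] [Group G] [Fintype G] (x y z : MonoidAlgebra k G) :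
    rankOne16 x y z = (y.coeff ⬝ᵥ z.coeff) • x := rfl

/-- `B₁(u, v)` is `u.coeff ⬝ᵥ v.coeff`. -/
def IsB₁Adjoint {k G : Type*} [Field k] [Group G] [Fintype G]
    (σ : (MonoidAlgebra k G →ₗ[k] MonoidAlgebra k G) →
      (MonoidAlgebra k G →ₗ[k] MonoidAlgebra k G)) :
    Prop :=
  ∀ f (u v : MonoidAlgebra k G), u.coeff ⬝ᵥ (f v).coeff = (σ f u).coeff ⬝ᵥ v.coeff

namespace IsB₁Adjoint

variable {k G : Type*} [Field k] [Group G] [Fintype G]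
  {σ : (MonoidAlgebra k G →ₗ[k] MonoidAlgebra k G) →
    (MonoidAlgebra k G →ₗ[k] MonoidAlgebra k G)}

lemma apply_eq (hσ : IsB₁Adjoint σ) {f f' : MonoidAlgebra k G →ₗ[k] MonoidAlgebra k G}
    (hf : ∀ u v, u.coeff ⬝ᵥ (f v).coeff = (f' u).coeff ⬝ᵥ v.coeff) : σ f = f' := by
  refine LinearMap.ext fun u => MonoidAlgebra.ext <| Finsupp.ext fun h => ?_
  rw [← dotProduct_coeff_of, ← dotProduct_coeff_of, ← hσ, hf]

lemma map_add (hσ : IsB₁Adjoint σ) (f f' : MonoidAlgebra k G →ₗ[k] MonoidAlgebra k G) :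
    σ (f + f') = σ f + σ f' :=
  hσ.apply_eq fun u v => by
    simp only [LinearMap.add_apply, coeff_add, Finsupp.coe_add, dotProduct_add, add_dotProduct,
      hσ f, hσ f']

lemma map_mulRight (hσ : IsB₁Adjoint σ) (a : MonoidAlgebra k G) :
    σ (LinearMap.mulRight k a) = LinearMap.mulRight k (contra16 k G a) :=
  hσ.apply_eq fun u v => dotProduct_coeff_mul_right u v a

lemma contra16_eq_of_map_mulRight_eq (hσ : IsB₁Adjoint σ) {a : MonoidAlgebra k G}
    (ha : σ (LinearMap.mulRight k a) = LinearMap.mulRight k a) : contra16 k G a = a := by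
  rw [hσ.map_mulRight] at ha
  simpa using LinearMap.congr_fun ha 1

lemma map_rankOne16 (hσ : IsB₁Adjoint σ) (x y : MonoidAlgebra k G) :
    σ (rankOne16 x y) = rankOne16 y x :=
  hσ.apply_eq fun u v => by
    simp only [rankOne16_apply, coeff_smul, Finsupp.coe_smul, smul_dotProduct,
      smul_eq_mul, dotProduct_comm u.coeff, mul_comm]

lemma map_rankOne16_add_rankOne16 (hσ : IsB₁Adjoint σ) (x y : MonoidAlgebra k G) :
    σ (rankOne16 x y + rankOne16 y x) = rankOne16 x y + rankOne16 y x := by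
  rw [hσ.map_add, hσ.map_rankOne16, hσ.map_rankOne16, add_comm]

end IsB₁Adjoint

lemma eq_mulRight_of_map_of_mul {k G : Type*} [CommSemiring k] [Monoid G]
    (f : MonoidAlgebra k G →ₗ[k] MonoidAlgebra k G)
    (hf : ∀ (x : G) (y : MonoidAlgebra k G), f (of k G x * y) = of k G x * f y) :
    f = LinearMap.mulRight k (f 1) :=
  lhom_ext' fun g => LinearMap.ext_ring <| by simpa using hf g 1

lemma Subgroup.sum_quotient_sum {G M : Type*} [Group G] [Fintype G] [AddCommMonoid M]
    (H : Subgroup G) [Fintype (G ⧸ H)] [Fintype H] (φ : G → M) :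
    ∑ c : G ⧸ H, ∑ h : H, φ (c.out * h) = ∑ g, φ g := by
  rw [← Fintype.sum_prod_type']
  refine Fintype.sum_bijective (fun p : (G ⧸ H) × H => p.1.out * (p.2 : G)) ⟨?_, fun g => ?_⟩
    _ _ fun _ => rfl
  · rintro ⟨c, h⟩ ⟨c', h'⟩ he
    have hc : c = c' := by
      simpa [QuotientGroup.mk_mul_of_mem _ h.2, QuotientGroup.mk_mul_of_mem _ h'.2] using
        congrArg (QuotientGroup.mk (s := H)) he
    subst hc
    exact Prod.ext rfl (Subtype.ext (mul_left_cancel he))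
  · have hg : (g : G ⧸ H).out⁻¹ * g ∈ H := QuotientGroup.eq.mp (QuotientGroup.out_eq' _)
    exact ⟨(g, ⟨_, hg⟩), by simp⟩

lemma sum_zpowers_of_sq_eq_one {G M : Type*} [Group G] [AddCommMonoid M] {t : G}
    (ht : t * t = 1) (ht1 : t ≠ 1) [Fintype (Subgroup.zpowers t)] (φ : G → M) :
    ∑ h : Subgroup.zpowers t, φ h = φ 1 + φ t := by
  have hfin : IsOfFinOrder t := isOfFinOrder_iff_pow_eq_one.mpr ⟨2, two_pos, by rwa [sq]⟩
  have hord : orderOf t = 2 := orderOf_eq_prime (by rwa [sq]) ht1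
  rw [← (finEquivZPowers hfin).sum_comp]
  simp only [finEquivZPowers_apply]
  rw [Fin.sum_univ_eq_sum_range (fun i => φ (t ^ i)), hord, Finset.sum_range_succ,
    Finset.sum_range_one, pow_zero, pow_one]

section Trace

variable {k G : Type*} [Field k] [Group G] [Fintype G]

lemma conj_rankOne16 (g : G) (x y : MonoidAlgebra k G) :
    LinearMap.mulLeft k (of k G g) ∘ₗ rankOne16 x y ∘ₗ LinearMap.mulLeft k (of k G g⁻¹) =
      rankOne16 (of k G g * x) (of k G g * y) := by
  refine LinearMap.ext fun z => ?_
  simp only [LinearMap.comp_apply, LinearMap.mulLeft_apply, rankOne16_apply, mul_smul_comm]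
  rw [← dotProduct_coeff_of_mul g y, ← mul_assoc, ← map_mul, mul_inv_cancel, map_one, one_mul]

lemma sum_dotProduct_smul_of (y z : MonoidAlgebra k G) :
    ∑ g, (z.coeff ⬝ᵥ (of k G g * y).coeff) • of k G g = z * contra16 k G y := by
  refine MonoidAlgebra.ext <| Finsupp.ext fun p => ?_
  rw [← dotProduct_coeff_of (z * _) p, dotProduct_comm, dotProduct_coeff_mul_right,
    contra16_contra16, dotProduct_comm]
  simp [coeff_sum, Finsupp.finsetSum_apply, of_apply, Finsupp.single_apply]

lemma sum_conj_rankOne16 (x y : MonoidAlgebra k G) :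
    ∑ g : G, LinearMap.mulLeft k (of k G g) ∘ₗ rankOne16 x y ∘ₗ
        LinearMap.mulLeft k (of k G g⁻¹) =
      LinearMap.mulRight k (contra16 k G y * x) := by
  refine LinearMap.ext fun z => ?_
  simp only [conj_rankOne16, LinearMap.sum_apply, rankOne16_apply, LinearMap.mulRight_apply,
    ← smul_mul_assoc, ← Finset.sum_mul, ← mul_assoc, dotProduct_comm _ z.coeff]
  rw [sum_dotProduct_smul_of]

lemma sum_conj_rankOne16_add_rankOne16 (x : MonoidAlgebra k G) :
    ∑ g : G, LinearMap.mulLeft k (of k G g) ∘ₗ (rankOne16 x 1 + rankOne16 1 x) ∘ₗ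
        LinearMap.mulLeft k (of k G g⁻¹) =
      LinearMap.mulRight k (x + contra16 k G x) := by
  refine LinearMap.ext fun z => ?_
  simp only [LinearMap.add_comp, LinearMap.comp_add, Finset.sum_add_distrib, sum_conj_rankOne16,
    contra16_one, LinearMap.add_apply, LinearMap.mulRight_apply, one_mul, mul_one, mul_add]

lemma sum_quotient_conj_rankOne16_of_sq_eq_one {t : G} (ht : t * t = 1) (ht1 : t ≠ 1)
    [Fintype (G ⧸ Subgroup.zpowers t)] :
    ∑ c : G ⧸ Subgroup.zpowers t, LinearMap.mulLeft k (of k G c.out) ∘ₗ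
        (rankOne16 (of k G t) 1 + rankOne16 1 (of k G t)) ∘ₗ
        LinearMap.mulLeft k (of k G c.out⁻¹) =
      LinearMap.mulRight k (of k G t) := by
  let φ : G → MonoidAlgebra k G →ₗ[k] MonoidAlgebra k G := fun g =>
    LinearMap.mulLeft k (of k G g) ∘ₗ rankOne16 (of k G t) 1 ∘ₗ
      LinearMap.mulLeft k (of k G g⁻¹)
  calc _ = ∑ c : G ⧸ Subgroup.zpowers t, ∑ h : Subgroup.zpowers t, φ (c.out * h) := by
        refine Finset.sum_congr rfl fun c _ => ?_
        rw [sum_zpowers_of_sq_eq_one ht ht1 fun h => φ (c.out * h)]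
        simp only [φ, LinearMap.add_comp, LinearMap.comp_add, conj_rankOne16, ← map_mul, mul_one,
          mul_assoc, ht]
    _ = ∑ g, φ g := Subgroup.sum_quotient_sum _ φ
    _ = LinearMap.mulRight k (of k G t) := by
      simp only [φ, sum_conj_rankOne16, contra16_one, one_mul]

end Trace

section Indicator

variable {k G ι : Type*} [Ring k] [Fintype ι] {w : ι → MonoidAlgebra k G}
  {C : ι → G → Prop}

lemma linearIndependent_of_coeff_eq_indicator
    (hw : ∀ i g, (w i).coeff g = if C i g then 1 else 0)
    (hdisj : ∀ i j g, C i g → C j g → i = j) (hne : ∀ i, ∃ g, C i g) :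
    LinearIndependent k w := by
  refine Fintype.linearIndependent_iff.mpr fun c hc i => ?_
  obtain ⟨g, hg⟩ := hne i
  have hcg := congrArg (fun a : MonoidAlgebra k G => a.coeff g) hc
  simp only [coeff_sum, Finsupp.finsetSum_apply, coeff_smul_apply, hw, smul_eq_mul, mul_ite,
    mul_one, mul_zero, coeff_zero, Finsupp.coe_zero, Pi.zero_apply] at hcg
  rwa [Finset.sum_eq_single i (fun j _ hji => if_neg fun hj => hji (hdisj j i g hj hg))
    (fun hi => absurd (Finset.mem_univ i) hi), if_pos hg] at hcg

lemma mem_span_of_coeff_eq_indicator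
    (hw : ∀ i g, (w i).coeff g = if C i g then 1 else 0)
    (hdisj : ∀ i j g, C i g → C j g → i = j) (hne : ∀ i, ∃ g, C i g)
    (hcover : ∀ g, ∃ i, C i g) {a : MonoidAlgebra k G}
    (ha : ∀ i g g', C i g → C i g' → a.coeff g = a.coeff g') :
    a ∈ Submodule.span k (Set.range w) := by
  choose rep hrep using hne
  suffices a = ∑ i, a.coeff (rep i) • w i from
    this ▸ Submodule.sum_mem _ fun i _ =>
      Submodule.smul_mem _ _ (Submodule.subset_span ⟨i, rfl⟩)
  refine MonoidAlgebra.ext <| Finsupp.ext fun g => ?_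
  obtain ⟨i, hi⟩ := hcover g
  simp only [coeff_sum, Finsupp.finsetSum_apply, coeff_smul_apply, hw, smul_eq_mul, mul_ite,
    mul_one, mul_zero]
  rw [Finset.sum_eq_single i (fun j _ hji => if_neg fun hj => hji (hdisj j i g hj hi))
    (fun hi => absurd (Finset.mem_univ i) hi), if_pos hi, ha i g (rep i) hi (hrep i)]

end Indicator

section RightMultiplication

variable {k A ι : Type*} [CommSemiring k] [Semiring A] [Module k A] [IsScalarTower k A A]

lemma LinearIndependent.mulRight_comp {w : ι → A} (hw : LinearIndependent k w) :
    LinearIndependent k (LinearMap.mulRight k ∘ w) :=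
  LinearIndependent.of_comp (LinearMap.applyₗ 1) <| by simpa [Function.comp_def] using hw

lemma mulRight_mem_span_mulRight_comp [SMulCommClass k A A] {w : ι → A} {a : A}
    (ha : a ∈ Submodule.span k (Set.range w)) :
    LinearMap.mulRight k a ∈ Submodule.span k (Set.range (LinearMap.mulRight k ∘ w)) := by
  rw [Set.range_comp]
  exact Submodule.apply_mem_span_image_of_mem_span (LinearMap.mul k A).flip ha

end RightMultiplication

section InversionClasses

variable {G : Type*} [Group G] {m n : ℕ} (t : Fin m → G) (gp : Fin n → G)

def inversionClass : Unit ⊕ Fin m ⊕ Fin n → G → Prop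
  | .inl _, g => g = 1
  | .inr (.inl i), g => g = t i
  | .inr (.inr j), g => g = gp j ∨ g = (gp j)⁻¹

lemma inversionClass_nonempty : ∀ i, ∃ g, inversionClass t gp i g
  | .inl _ => ⟨1, rfl⟩
  | .inr (.inl i) => ⟨t i, rfl⟩
  | .inr (.inr j) => ⟨gp j, .inl rfl⟩

lemma eq_or_eq_inv_of_inversionClass {i : Unit ⊕ Fin m ⊕ Fin n} {g g' : G}
    (hg : inversionClass t gp i g) (hg' : inversionClass t gp i g') : g' = g ∨ g' = g⁻¹ := by
  rcases i with _ | i | j <;> simp only [inversionClass] at hg hg'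
  · exact .inl (hg'.trans hg.symm)
  · exact .inl (hg'.trans hg.symm)
  · rcases hg with rfl | rfl <;> rcases hg' with rfl | rfl <;> simp

lemma inversionClass_unique (htinv : ∀ i, t i * t i = 1 ∧ t i ≠ 1)
    (htinj : Function.Injective t) (hgp : ∀ j, gp j * gp j ≠ 1)
    (hgpinj : ∀ j j' : Fin n, (gp j = gp j' ∨ gp j = (gp j')⁻¹) → j = j') :
    ∀ i i' g, inversionClass t gp i g → inversionClass t gp i' g → i = i' := by
  have hgp1 : ∀ j, gp j ≠ 1 := fun j h => hgp j (by rw [h, one_mul])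
  have hgp_inv1 : ∀ j, (gp j)⁻¹ ≠ 1 := fun j => inv_ne_one.mpr (hgp1 j)
  have ht_ne_gp : ∀ i j, t i ≠ gp j := fun i j h => hgp j (h ▸ (htinv i).1)
  have ht_ne_gp_inv : ∀ i j, t i ≠ (gp j)⁻¹ := fun i j h => ht_ne_gp i j <| by
    rw [← inv_inv (gp j), ← h, inv_eq_of_mul_eq_one_right (htinv i).1]
  rintro (_ | i | j) (_ | i' | j') g hg hg' <;> simp only [inversionClass] at hg hg'
  all_goals grind [inv_inj, inv_eq_iff_eq_inv]

end InversionClasses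

section SymmetricBasis

variable {k G : Type*} [Group G] {m n : ℕ} (t : Fin m → G) (gp : Fin n → G)

noncomputable def symBasis [Semiring k] : Unit ⊕ Fin m ⊕ Fin n → MonoidAlgebra k G :=
  Sum.elim (fun _ => 1)
    (Sum.elim (fun i => of k G (t i)) fun j => of k G (gp j) + of k G (gp j)⁻¹)

lemma coeff_symBasis [Semiring k] (hgp : ∀ j, gp j * gp j ≠ 1)
    (i : Unit ⊕ Fin m ⊕ Fin n) (g : G) :
    (symBasis (k := k) t gp i).coeff g = if inversionClass t gp i g then 1 else 0 := by
  rcases i with _ | i | j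
  · exact Finsupp.single_apply.trans (if_congr eq_comm rfl rfl)
  · exact Finsupp.single_apply.trans (if_congr eq_comm rfl rfl)
  · have hgp_ne_inv : gp j ≠ (gp j)⁻¹ := fun h =>
      hgp j (by rw [← mul_inv_cancel (gp j), ← h])
    simp only [symBasis, inversionClass, Sum.elim_inr, coeff_add, of_apply, Finsupp.coe_add,
      Pi.add_apply, coeff_single, Finsupp.single_apply]
    by_cases h : g = gp j
    · subst h; simp [hgp_ne_inv, hgp_ne_inv.symm]
    by_cases h' : g = (gp j)⁻¹
    · subst h'; simp [hgp_ne_inv]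
    · simp [h, h', Ne.symm h, Ne.symm h']

lemma contra16_symBasis [Field k] (ht : ∀ i, t i * t i = 1) (i : Unit ⊕ Fin m ⊕ Fin n) :
    contra16 k G (symBasis t gp i) = symBasis t gp i := by
  rcases i with _ | i | j
  · exact contra16_one
  · simp only [symBasis, Sum.elim_inr, Sum.elim_inl, contra16_of,
      inv_eq_of_mul_eq_one_right (ht i)]
  · simp only [symBasis, Sum.elim_inr, map_add, contra16_of, inv_inv, add_comm]

lemma linearIndependent_symBasis [Ring k] (htinv : ∀ i, t i * t i = 1 ∧ t i ≠ 1)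
    (htinj : Function.Injective t) (hgp : ∀ j, gp j * gp j ≠ 1)
    (hgpinj : ∀ j j' : Fin n, (gp j = gp j' ∨ gp j = (gp j')⁻¹) → j = j') :
    LinearIndependent k (symBasis (k := k) t gp) :=
  linearIndependent_of_coeff_eq_indicator (coeff_symBasis t gp hgp)
    (inversionClass_unique t gp htinv htinj hgp hgpinj) (inversionClass_nonempty t gp)

lemma mem_span_symBasis [Field k] (htinv : ∀ i, t i * t i = 1 ∧ t i ≠ 1)
    (htinj : Function.Injective t) (hgp : ∀ j, gp j * gp j ≠ 1)
    (hgpinj : ∀ j j' : Fin n, (gp j = gp j' ∨ gp j = (gp j')⁻¹) → j = j')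
    (hcover : ∀ x : G, x = 1 ∨ (∃ i, x = t i) ∨ ∃ j, x = gp j ∨ x = (gp j)⁻¹)
    {a : MonoidAlgebra k G} (ha : contra16 k G a = a) :
    a ∈ Submodule.span k (Set.range (symBasis t gp)) := by
  refine mem_span_of_coeff_eq_indicator (coeff_symBasis t gp hgp)
    (inversionClass_unique t gp htinv htinj hgp hgpinj) (inversionClass_nonempty t gp)
    (fun g => ?_) fun i g g' hg hg' => ?_
  · rcases hcover g with h | ⟨i, h⟩ | ⟨j, h⟩
    exacts [⟨.inl (), h⟩, ⟨.inr (.inl i), h⟩, ⟨.inr (.inr j), h⟩]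
  · rcases eq_or_eq_inv_of_inversionClass t gp hg hg' with rfl | rfl
    · rfl
    · rw [← coeff_contra16, ha]

end SymmetricBasis

theorem stmt16_general {k G : Type*} [Field k] [Group G] [Fintype G]
    (σ : (MonoidAlgebra k G →ₗ[k] MonoidAlgebra k G) →
        (MonoidAlgebra k G →ₗ[k] MonoidAlgebra k G))
    (hσ : ∀ (f : MonoidAlgebra k G →ₗ[k] MonoidAlgebra k G) (u v : MonoidAlgebra k G),
      (∑ g : G, u.coeff g * (f v).coeff g) = ∑ g : G, (σ f u).coeff g * v.coeff g)
    (m n : ℕ) (t : Fin m → G) (gp : Fin n → G)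
    (htinv : ∀ i, t i * t i = 1 ∧ t i ≠ 1)
    (htinj : Function.Injective t)
    (hgp : ∀ j, gp j * gp j ≠ 1)  -- gp j is not an involution
    (hgpinj : ∀ j j' : Fin n, (gp j = gp j' ∨ gp j = (gp j')⁻¹) → j = j')
    (hcover : ∀ x : G, x = 1 ∨ (∃ i, x = t i) ∨ ∃ j, x = gp j ∨ x = (gp j)⁻¹) :
    -- the basis family
    (let v : Unit ⊕ Fin m ⊕ Fin n → (MonoidAlgebra k G →ₗ[k] MonoidAlgebra k G) :=
      Sum.elim (fun _ => LinearMap.mulRight k (1 : MonoidAlgebra k G))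
        (Sum.elim (fun i => LinearMap.mulRight k (MonoidAlgebra.of k G (t i)))
          (fun j => LinearMap.mulRight k
            (MonoidAlgebra.of k G (gp j) + MonoidAlgebra.of k G (gp j)⁻¹)));
    -- each member is a σ-invariant element of E_G(kG)
    (∀ i, (∀ (x : G) (y : MonoidAlgebra k G),
        v i (MonoidAlgebra.of k G x * y) = MonoidAlgebra.of k G x * v i y) ∧ σ (v i) = v i) ∧
    -- it is linearly independent
    LinearIndependent k v ∧
    -- and spans the σ-invariant elements of E_G(kG)
    (∀ f : MonoidAlgebra k G →ₗ[k] MonoidAlgebra k G,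
      (∀ (x : G) (y : MonoidAlgebra k G),
        f (MonoidAlgebra.of k G x * y) = MonoidAlgebra.of k G x * f y) →
      σ f = f → f ∈ Submodule.span k (Set.range v))) ∧
    -- r(1) is (1,σ)-projective
    (∃ F, σ F = F ∧
      (∑ g : G, (LinearMap.mulLeft k (MonoidAlgebra.of k G g)) ∘ₗ F ∘ₗ
          (LinearMap.mulLeft k (MonoidAlgebra.of k G g⁻¹))) =
        LinearMap.mulRight k (1 : MonoidAlgebra k G)) ∧
    -- each r(gⱼ+gⱼ⁻¹) is (1,σ)-projective
    (∀ j : Fin n, ∃ F, σ F = F ∧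
      (∑ g : G, (LinearMap.mulLeft k (MonoidAlgebra.of k G g)) ∘ₗ F ∘ₗ
          (LinearMap.mulLeft k (MonoidAlgebra.of k G g⁻¹))) =
        LinearMap.mulRight k
          (MonoidAlgebra.of k G (gp j) + MonoidAlgebra.of k G (gp j)⁻¹)) ∧
    -- r(tᵢ) = tr_{⟨tᵢ⟩}^G (tᵢ⊗1 + 1⊗tᵢ), with tᵢ⊗1 + 1⊗tᵢ σ-invariant
    (∀ i : Fin m,
      σ (rankOne16 (MonoidAlgebra.of k G (t i)) 1 + rankOne16 1 (MonoidAlgebra.of k G (t i))) =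
        rankOne16 (MonoidAlgebra.of k G (t i)) 1 + rankOne16 1 (MonoidAlgebra.of k G (t i)) ∧
      (∑ c : G ⧸ Subgroup.zpowers (t i),
        (LinearMap.mulLeft k (MonoidAlgebra.of k G (Quotient.out c))) ∘ₗ
          (rankOne16 (MonoidAlgebra.of k G (t i)) 1 +
            rankOne16 1 (MonoidAlgebra.of k G (t i))) ∘ₗ
          (LinearMap.mulLeft k (MonoidAlgebra.of k G (Quotient.out c)⁻¹))) =
        LinearMap.mulRight k (MonoidAlgebra.of k G (t i))) := by
  have hσ' : IsB₁Adjoint σ := hσ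
  refine ⟨?_, ⟨rankOne16 1 1, hσ'.map_rankOne16 1 1, ?_⟩,
    fun j => ⟨_, hσ'.map_rankOne16_add_rankOne16 (of k G (gp j)) 1, ?_⟩,
    fun i => ⟨hσ'.map_rankOne16_add_rankOne16 (of k G (t i)) 1,
      sum_quotient_conj_rankOne16_of_sq_eq_one (htinv i).1 (htinv i).2⟩⟩
  · intro v
    have hv : v = LinearMap.mulRight k ∘ symBasis t gp := by
      funext i
      rcases i with _ | _ | _ <;> rfl
    rw [hv]
    refine ⟨fun i => ⟨fun x y => mul_assoc _ _ _, ?_⟩,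
      (linearIndependent_symBasis t gp htinv htinj hgp hgpinj).mulRight_comp, fun f hf hσf => ?_⟩
    · rw [Function.comp_apply, hσ'.map_mulRight, contra16_symBasis t gp fun i => (htinv i).1]
    · rw [eq_mulRight_of_map_of_mul f hf] at hσf ⊢
      exact mulRight_mem_span_mulRight_comp <| mem_span_symBasis t gp htinv htinj hgp hgpinj hcover
        (hσ'.contra16_eq_of_map_mulRight_eq hσf)
  · rw [sum_conj_rankOne16, contra16_one, one_mul]
  · rw [sum_conj_rankOne16_add_rankOne16, contra16_of]

/-- A basis of the `σ`-invariant elements of `E_G(kG)`, char 2: `r(1)`, `r(tᵢ)` for the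
involutions `tᵢ`, and `r(gⱼ + gⱼ⁻¹)` for the pairs of remaining non-identity elements;
`r(1)` and `r(gⱼ+gⱼ⁻¹)` are traces from the trivial subgroup of `σ`-invariant
endomorphisms, and `r(tᵢ) = tr_{⟨tᵢ⟩}^G (tᵢ⊗1 + 1⊗tᵢ)` with `tᵢ⊗1 + 1⊗tᵢ`
`σ`-invariant. -/
theorem stmt16 {k G : Type*} [Field k] [CharP k 2] [Group G] [Fintype G]
    (σ : (MonoidAlgebra k G →ₗ[k] MonoidAlgebra k G) →
        (MonoidAlgebra k G →ₗ[k] MonoidAlgebra k G))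
    (hσ : ∀ (f : MonoidAlgebra k G →ₗ[k] MonoidAlgebra k G) (u v : MonoidAlgebra k G),
      (∑ g : G, u.coeff g * (f v).coeff g) = ∑ g : G, (σ f u).coeff g * v.coeff g)
    (m n : ℕ) (t : Fin m → G) (gp : Fin n → G)
    (htinv : ∀ i, t i * t i = 1 ∧ t i ≠ 1)
    (htinj : Function.Injective t)
    (hgp : ∀ j, gp j * gp j ≠ 1)  -- gp j is not an involution
    (hgp1 : ∀ j, gp j ≠ 1)
    (hgpinj : ∀ j j' : Fin n, (gp j = gp j' ∨ gp j = (gp j')⁻¹) → j = j')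
    (hcover : ∀ x : G, x = 1 ∨ (∃ i, x = t i) ∨ ∃ j, x = gp j ∨ x = (gp j)⁻¹) :
    -- the basis family
    (let v : Unit ⊕ Fin m ⊕ Fin n → (MonoidAlgebra k G →ₗ[k] MonoidAlgebra k G) :=
      Sum.elim (fun _ => LinearMap.mulRight k (1 : MonoidAlgebra k G))
        (Sum.elim (fun i => LinearMap.mulRight k (MonoidAlgebra.of k G (t i)))
          (fun j => LinearMap.mulRight k
            (MonoidAlgebra.of k G (gp j) + MonoidAlgebra.of k G (gp j)⁻¹)));
    -- each member is a σ-invariant element of E_G(kG)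
    (∀ i, (∀ (x : G) (y : MonoidAlgebra k G),
        v i (MonoidAlgebra.of k G x * y) = MonoidAlgebra.of k G x * v i y) ∧ σ (v i) = v i) ∧
    -- it is linearly independent
    LinearIndependent k v ∧
    -- and spans the σ-invariant elements of E_G(kG)
    (∀ f : MonoidAlgebra k G →ₗ[k] MonoidAlgebra k G,
      (∀ (x : G) (y : MonoidAlgebra k G),
        f (MonoidAlgebra.of k G x * y) = MonoidAlgebra.of k G x * f y) →
      σ f = f → f ∈ Submodule.span k (Set.range v))) ∧
    -- r(1) is (1,σ)-projective
    (∃ F, σ F = F ∧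
      (∑ g : G, (LinearMap.mulLeft k (MonoidAlgebra.of k G g)) ∘ₗ F ∘ₗ
          (LinearMap.mulLeft k (MonoidAlgebra.of k G g⁻¹))) =
        LinearMap.mulRight k (1 : MonoidAlgebra k G)) ∧
    -- each r(gⱼ+gⱼ⁻¹) is (1,σ)-projective
    (∀ j : Fin n, ∃ F, σ F = F ∧
      (∑ g : G, (LinearMap.mulLeft k (MonoidAlgebra.of k G g)) ∘ₗ F ∘ₗ
          (LinearMap.mulLeft k (MonoidAlgebra.of k G g⁻¹))) =
        LinearMap.mulRight k
          (MonoidAlgebra.of k G (gp j) + MonoidAlgebra.of k G (gp j)⁻¹)) ∧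
    -- r(tᵢ) = tr_{⟨tᵢ⟩}^G (tᵢ⊗1 + 1⊗tᵢ), with tᵢ⊗1 + 1⊗tᵢ σ-invariant
    (∀ i : Fin m,
      σ (rankOne16 (MonoidAlgebra.of k G (t i)) 1 + rankOne16 1 (MonoidAlgebra.of k G (t i))) =
        rankOne16 (MonoidAlgebra.of k G (t i)) 1 + rankOne16 1 (MonoidAlgebra.of k G (t i)) ∧
      (∑ c : G ⧸ Subgroup.zpowers (t i),
        (LinearMap.mulLeft k (MonoidAlgebra.of k G (Quotient.out c))) ∘ₗ
          (rankOne16 (MonoidAlgebra.of k G (t i)) 1 +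
            rankOne16 1 (MonoidAlgebra.of k G (t i))) ∘ₗ
          (LinearMap.mulLeft k (MonoidAlgebra.of k G (Quotient.out c)⁻¹))) =
        LinearMap.mulRight k (MonoidAlgebra.of k G (t i))) :=
  stmt16_general σ hσ m n t gp htinv htinj hgp hgpinj hcover
end

section
/- Let M be a non-trivial self-dual irreducible kG-module over an algebraically closed field k of characteristic 2, with its (unique up to scalar) G-invariant symplectic form B. Let t ∈ G be an involution, and suppose B(tm, m) ≠ 0 for some m ∈ M. Then there exists a primitive idempotent f ∈ kG with kGf ≅ P(M) (the projective cover of M) such that the bilinear form B_t(x,y) = B₁(xt,y) on kG is non-degenerate on kGf. -/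
/-!
Let `σ(x) = t x* t`, where `*` is the antipode `g ↦ g⁻¹` of `kG`, and `D(v, w) = B(tv, w)`.
An alternating form is symmetric in characteristic 2, so `D` is a nondegenerate symmetric form
and `ρ(σ x)` is the `D`-adjoint of `ρ(x)`. Normalising `m` to `D(m, m) = 1`, the projection
`p = D(m, -) m` is `D`-self-adjoint and `p End(M) p = k p`. By Burnside's theorem `p` lifts to
some `w ∈ kG`, and Fitting's lemma applied to `w σ(w)` gives a `σ`-fixed idempotent lifting `p`.
One of minimal rank is primitive: in a decomposition into orthogonal idempotents one summand
lifts `p` and then contains a smaller `σ`-fixed idempotent lifting `p`. Finally the values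
`B_t(xf, gf)`, `g ∈ G`, are the coefficients of `xft · f*`, and `σ(f) = f` means `f* = tft`, so
`xft · f* = xft`, which vanishes only if `xf = 0`.
-/

open Polynomial

theorem AlgHom.surjective_of_irreducible {k A M : Type*} [Field k] [IsAlgClosed k] [Ring A]
    [Algebra k A] [AddCommGroup M] [Module k M] [FiniteDimensional k M] [Nontrivial M]
    (φ : A →ₐ[k] Module.End k M)
    (hirr : ∀ N : Submodule k M, (∀ a, ∀ m ∈ N, φ a m ∈ N) → N = ⊥ ∨ N = ⊤) :
    Function.Surjective φ := by
  let _ : Module A M := Module.compHom M φ.toRingHom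
  have _ : IsScalarTower k A M := ⟨fun c a m => by
    change φ (c • a) m = c • φ a m
    simp⟩
  have _ : IsSimpleModule A M := (isSimpleModule_iff A M).mpr
    { eq_bot_or_eq_top N := by
        rcases hirr (N.restrictScalars k) fun a m hm => N.smul_mem a hm with h | h
        · exact .inl ((Submodule.restrictScalars_eq_bot_iff k A M).mp h)
        · exact .inr ((Submodule.restrictScalars_eq_top_iff k A M).mp h) }
  have schur := (IsSimpleModule.algebraMap_end_bijective_of_isAlgClosed (A := A) (V := M) k).2
  have _ : Module.Finite (Module.End A M) M := Module.Finite.of_restrictScalars_finite k _ _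
  intro T
  let T' : Module.End (Module.End A M) M :=
    { toFun := T
      map_add' := T.map_add
      map_smul' := fun ψ m => by
        obtain ⟨c, rfl⟩ := schur ψ
        exact T.map_smul c m }
  obtain ⟨a, ha⟩ := Module.Finite.toModuleEnd_moduleEnd_surjective T'
  exact ⟨a, LinearMap.ext fun m => LinearMap.congr_fun ha m⟩

theorem IsArtinianRing.exists_isIdempotentElem_mul {R : Type*} [CommRing R] [IsArtinianRing R]
    (a : R) : ∃ (b : R) (n : ℕ), IsIdempotentElem (a * b) ∧ a ^ n = a ^ n * (a * b) := by
  obtain ⟨n, y, hy⟩ := IsArtinian.exists_pow_succ_smul_dvd a (1 : R)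
  simp only [smul_eq_mul, mul_one, Nat.succ_eq_add_one] at hy
  have hfix : ∀ j, a ^ n = a ^ n * (a * y) ^ j := by
    intro j
    induction j with
    | zero => simp
    | succ j ih => linear_combination ih - (a * y) ^ j * hy
  refine ⟨y * (a * y) ^ n, n, ?_, ?_⟩
  · rw [IsIdempotentElem]
    linear_combination (-(a * y ^ (n + 1))) * hfix (n + 1)
  · linear_combination hfix (n + 1)

open scoped IsMulCommutative in
theorem exists_isIdempotentElem_mul_aeval {k A : Type*} [Field k] [Ring A] [Algebra k A]
    [FiniteDimensional k A] (a : A) :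
    ∃ (r : k[X]) (n : ℕ), IsIdempotentElem (a * aeval a r) ∧ a ^ n = a ^ n * (a * aeval a r) := by
  have : IsArtinianRing (Algebra.adjoin k {a}) := isArtinian_of_tower k inferInstance
  obtain ⟨b, n, hidem, hfix⟩ := IsArtinianRing.exists_isIdempotentElem_mul
    (⟨a, Algebra.self_mem_adjoin_singleton k a⟩ : Algebra.adjoin k {a})
  obtain ⟨r, hr⟩ : (b : A) ∈ (aeval (R := k) a).range := by
    rw [← Algebra.adjoin_singleton_eq_range_aeval]; exact b.2
  refine ⟨r, n, ?_, ?_⟩ <;> rw [show aeval a r = b from hr]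
  · exact congrArg Subtype.val hidem
  · exact congrArg Subtype.val hfix

def IsPrimitiveIdempotent {R : Type*} [Semiring R] (f : R) : Prop :=
  f * f = f ∧ f ≠ 0 ∧
    ∀ e₁ e₂ : R, e₁ * e₁ = e₁ → e₂ * e₂ = e₂ → e₁ * e₂ = 0 → e₂ * e₁ = 0 → e₁ + e₂ = f →
      e₁ = 0 ∨ e₂ = 0

structure IsAntiInvolution {k A : Type*} [CommSemiring k] [Semiring A] [Algebra k A]
    (σ : A →ₗ[k] A) : Prop where
  map_mul : ∀ x y, σ (x * y) = σ y * σ x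
  apply_apply : ∀ x, σ (σ x) = x

namespace IsAntiInvolution

variable {k A : Type*} [CommSemiring k] [Semiring A] [Algebra k A] {σ : A →ₗ[k] A}
  (hσ : IsAntiInvolution σ)
include hσ

theorem map_one : σ 1 = 1 := by
  simpa [hσ.apply_apply] using (hσ.map_mul (σ 1) 1).symm

theorem map_pow (a : A) (n : ℕ) : σ (a ^ n) = σ a ^ n := by
  induction n with
  | zero => simp [hσ.map_one]
  | succ n ih => rw [pow_succ, hσ.map_mul, ih, pow_succ']

theorem map_aeval (a : A) (q : k[X]) : σ (aeval a q) = aeval (σ a) q := by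
  induction q using Polynomial.induction_on' with
  | add p q hp hq => simp [hp, hq]
  | monomial n c => simp [aeval_monomial, ← Algebra.smul_def, hσ.map_pow]

end IsAntiInvolution

section FixedIdempotents

variable {k A E : Type*} [Field k] [Ring A] [Algebra k A] [Ring E] [Algebra k E]

theorem exists_fixed_idempotent_of_map_eq [FiniteDimensional k A] {σ : A →ₗ[k] A}
    (hσ : IsAntiInvolution σ) (φ : A →ₐ[k] E) {p : E} (hp : IsIdempotentElem p)
    (hpσ : ∀ x, φ x = p → φ (σ x) = p) {e w : A} (hσe : σ e = e) (hew : e * w = w)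
    (hφw : φ w = p) :
    ∃ e' y : A, IsIdempotentElem e' ∧ σ e' = e' ∧ φ e' = p ∧ e * e' = e' ∧ e' * e = e' ∧
      e' = w * y := by
  set a := w * σ w with ha
  have hσa : σ a = a := by rw [ha, hσ.map_mul, hσ.apply_apply]
  have hφa : φ a = p := by rw [ha, map_mul, hφw, hpσ w hφw, hp.eq]
  have hea : e * a = a := by rw [← mul_assoc, hew]
  have hae : a * e = a := by rw [mul_assoc, ← hσe, ← hσ.map_mul, hew]
  obtain ⟨r, n, hidem, hfix⟩ := exists_isIdempotentElem_mul_aeval (k := k) a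
  have hcomm : a * aeval a r = aeval a r * a := by
    simpa using congrArg (aeval a) (mul_comm X r)
  refine ⟨a * aeval a r, σ w * aeval a r, hidem, ?_, ?_, ?_, ?_, ?_⟩
  · rw [hσ.map_mul, hσ.map_aeval, hσa, hcomm]
  · have hpφ : p = p * φ (a * aeval a r) := by
      have h := congrArg φ (congrArg (a * ·) hfix)
      rwa [← mul_assoc, ← pow_succ', map_mul, map_pow, hφa, hp.pow_succ_eq] at h
    calc φ (a * aeval a r) = p * φ (aeval a r) := by rw [map_mul, hφa]
      _ = p * φ (a * aeval a r) := by rw [map_mul, hφa, ← mul_assoc, hp.eq]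
      _ = p := hpφ.symm
  · rw [← mul_assoc, hea]
  · rw [hcomm, mul_assoc, hae]
  · simp only [a, mul_assoc]

theorem finrank_range_mulRight_lt [FiniteDimensional k A] {e f : A} (he : IsIdempotentElem e)
    (hef : e * f = e) (hfe : f * e = e) (hne : e ≠ f) :
    Module.finrank k (LinearMap.range (LinearMap.mulRight k e)) <
      Module.finrank k (LinearMap.range (LinearMap.mulRight k f)) := by
  have hle : LinearMap.range (LinearMap.mulRight k e) ≤
      LinearMap.range (LinearMap.mulRight k f) := by
    rintro _ ⟨y, rfl⟩
    exact ⟨y * e, by simp [mul_assoc, hef]⟩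
  refine (Submodule.finrank_mono hle).lt_of_ne fun h => hne ?_
  obtain ⟨z, hz⟩ : f ∈ LinearMap.range (LinearMap.mulRight k e) :=
    (Submodule.eq_of_le_of_finrank_eq hle h).symm ▸ ⟨1, one_mul f⟩
  simp only [LinearMap.mulRight_apply] at hz
  rw [← hfe, ← hz, mul_assoc, he.eq]

theorem eq_or_eq_of_add_eq_of_mul_eq_zero {p : E} (hp : IsIdempotentElem p) (hp0 : p ≠ 0)
    (hcorner : ∀ T, ∃ c : k, p * T * p = c • p) {x₁ x₂ : E} (h₁ : p * x₁ * p = x₁)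
    (h₂ : p * x₂ * p = x₂) (hadd : x₁ + x₂ = p) (hmul : x₁ * x₂ = 0) : x₁ = p ∨ x₂ = p := by
  obtain ⟨c₁, hc₁⟩ := hcorner x₁
  obtain ⟨c₂, hc₂⟩ := hcorner x₂
  rw [h₁] at hc₁
  rw [h₂] at hc₂
  have hc : c₁ * c₂ = 0 := by
    rw [hc₁, hc₂, smul_mul_smul, hp.eq, smul_eq_zero] at hmul
    exact hmul.resolve_right hp0
  have hsum : c₁ + c₂ = 1 :=
    smul_left_injective k hp0 (by simpa [add_smul, ← hc₁, ← hc₂] using hadd)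
  rcases mul_eq_zero.mp hc with h | h
  · right; rw [hc₂, show c₂ = 1 by linear_combination hsum - h, one_smul]
  · left; rw [hc₁, show c₁ = 1 by linear_combination hsum - h, one_smul]

theorem exists_primitive_fixed_idempotent [FiniteDimensional k A] {σ : A →ₗ[k] A}
    (hσ : IsAntiInvolution σ) (φ : A →ₐ[k] E) {p : E} (hp : IsIdempotentElem p) (hp0 : p ≠ 0)
    (hcorner : ∀ T, ∃ c : k, p * T * p = c • p) (hpσ : ∀ x, φ x = p → φ (σ x) = p)
    (hpφ : p ∈ Set.range φ) :
    ∃ f : A, IsPrimitiveIdempotent f ∧ σ f = f ∧ φ f = p := by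
  let rk : A → ℕ := fun e => Module.finrank k (LinearMap.range (LinearMap.mulRight k e))
  obtain ⟨u, hu⟩ := hpφ
  obtain ⟨e₀, -, he₀, hσe₀, hφe₀, -⟩ :=
    exists_fixed_idempotent_of_map_eq hσ φ hp hpσ hσ.map_one (one_mul u) hu
  obtain ⟨f, ⟨hf, hσf, hφf⟩, hmin⟩ := (measure rk).wf.has_min
    {e | IsIdempotentElem e ∧ σ e = e ∧ φ e = p} ⟨e₀, he₀, hσe₀, hφe₀⟩
  have key : ∀ e₁ e₂ : A, f * e₁ = e₁ → e₂ * f = e₂ → e₂ * e₁ = 0 → φ e₁ = p → e₂ = 0 := by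
    intro e₁ e₂ hfe₁ he₂f he₂₁ hφe₁
    obtain ⟨e', y, he', hσe', hφe', hfe', he'f, rfl⟩ :=
      exists_fixed_idempotent_of_map_eq hσ φ hp hpσ hσf hfe₁ hφe₁
    have : e₁ * y = f := by
      by_contra hne
      exact hmin _ ⟨he', hσe', hφe'⟩ (finrank_range_mulRight_lt he' he'f hfe' hne)
    rw [← he₂f, ← this, ← mul_assoc, he₂₁, zero_mul]
  refine ⟨f, ⟨hf, fun h => hp0 (by rw [← hφf, h, map_zero]), ?_⟩, hσf, hφf⟩
  intro e₁ e₂ h₁ h₂ h₁₂ h₂₁ hsum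
  have hfe₁ : f * e₁ = e₁ := by rw [← hsum, add_mul, h₁, h₂₁, add_zero]
  have he₁f : e₁ * f = e₁ := by rw [← hsum, mul_add, h₁, h₁₂, add_zero]
  have hfe₂ : f * e₂ = e₂ := by rw [← hsum, add_mul, h₂, h₁₂, zero_add]
  have he₂f : e₂ * f = e₂ := by rw [← hsum, mul_add, h₂, h₂₁, zero_add]
  have hφcorner : ∀ e, f * e = e → e * f = e → p * φ e * p = φ e := fun e hl hr => by
    rw [← hφf, ← map_mul, ← map_mul, hl, hr]
  rcases eq_or_eq_of_add_eq_of_mul_eq_zero hp hp0 hcorner (hφcorner e₁ hfe₁ he₁f)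
      (hφcorner e₂ hfe₂ he₂f) (by rw [← map_add, hsum, hφf]) (by rw [← map_mul, h₁₂, map_zero])
    with h | h
  · exact .inr (key e₁ e₂ hfe₁ he₂f h₂₁ h)
  · exact .inl (key e₂ e₁ hfe₂ he₁f h₁₂ h)

end FixedIdempotents

theorem LinearMap.exists_apply_self_eq_one {k M : Type*} [Field k] [IsAlgClosed k]
    [AddCommGroup M] [Module k M] {D : M →ₗ[k] M →ₗ[k] k} {m₀ : M} (h : D m₀ m₀ ≠ 0) :
    ∃ m, D m m = 1 := by
  obtain ⟨s, hs⟩ := IsAlgClosed.exists_pow_nat_eq (D m₀ m₀)⁻¹ two_pos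
  exact ⟨s • m₀, by simp [← mul_assoc, ← sq, hs, inv_mul_cancel₀ h]⟩

section RankOne

variable {R M : Type*} [CommRing R] [AddCommGroup M] [Module R M] {D : M →ₗ[R] M →ₗ[R] R}

theorem LinearMap.isIdempotentElem_smulRight {m : M} (hm : D m m = 1) :
    IsIdempotentElem (LinearMap.smulRight (D m) m) :=
  LinearMap.ext fun v => by simp [hm]

theorem LinearMap.smulRight_mul_mul_smulRight (m : M) (T : Module.End R M) :
    LinearMap.smulRight (D m) m * T * LinearMap.smulRight (D m) m =
      D m (T m) • LinearMap.smulRight (D m) m :=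
  LinearMap.ext fun v => by simp [smul_smul, mul_comm]

theorem LinearMap.IsSymm.isAdjointPair_smulRight (hD : D.IsSymm) (m : M) :
    LinearMap.IsAdjointPair D D (LinearMap.smulRight (D m) m) (LinearMap.smulRight (D m) m) :=
  fun v w => by simp [← hD.eq v m, mul_comm]

theorem LinearMap.IsAdjointPair.eq_of_separatingLeft (hD : D.SeparatingLeft)
    {f f' g : Module.End R M} (h : LinearMap.IsAdjointPair D D f g)
    (h' : LinearMap.IsAdjointPair D D f' g) : f = f' :=
  LinearMap.ext fun v => sub_eq_zero.mp <| hD _ fun w => by simp [h v w, h' v w]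

end RankOne

namespace MonoidAlgebra

open HopfAlgebra

variable {k G : Type*} [CommRing k] [Group G]

theorem coeff_antipode (x : MonoidAlgebra k G) (g : G) :
    (antipode k x).coeff g = x.coeff g⁻¹ := by
  induction x using MonoidAlgebra.induction_linear with
  | zero => simp
  | add x y hx hy => simp [hx, hy]
  | single h c => classical simp [Finsupp.single_apply, inv_eq_iff_eq_inv]

theorem coeff_mul_antipode [Fintype G] (z w : MonoidAlgebra k G) (s : G) :
    (z * antipode k w).coeff s = ∑ g, z.coeff g * (single s 1 * w).coeff g := by
  rw [coeff_mul_apply_left, Finsupp.sum_fintype _ _ (by simp)]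
  simp [coeff_antipode]

variable (k) in
noncomputable def twistedAntipode (t : G) : MonoidAlgebra k G →ₗ[k] MonoidAlgebra k G :=
  LinearMap.mulLeft k (single t 1) ∘ₗ LinearMap.mulRight k (single t 1) ∘ₗ antipode k

theorem twistedAntipode_apply (t : G) (x : MonoidAlgebra k G) :
    twistedAntipode k t x = single t 1 * antipode k x * single t 1 := by
  simp [twistedAntipode, mul_assoc]

theorem twistedAntipode_single (t g : G) (c : k) :
    twistedAntipode k t (single g c) = single (t * g⁻¹ * t) c := by
  simp [twistedAntipode_apply]

theorem isAntiInvolution_twistedAntipode {t : G} (ht : t * t = 1) :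
    IsAntiInvolution (twistedAntipode k t) := by
  have htt : ∀ g, t * (t * g) = g := fun g => by rw [← mul_assoc, ht, one_mul]
  have ht' : t⁻¹ = t := inv_eq_of_mul_eq_one_right ht
  refine ⟨fun x y => ?_, fun x => ?_⟩
  · induction x using induction_linear with
    | zero => simp
    | add x x' hx hx' => simp [add_mul, mul_add, hx, hx']
    | single g a =>
      induction y using induction_linear with
      | zero => simp
      | add y y' hy hy' => simp [mul_add, add_mul, hy, hy']
      | single h b => simp [twistedAntipode_single, mul_assoc, htt, mul_comm a b]
  · induction x using induction_linear with
    | zero => simp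
    | add x x' hx hx' => simp [hx, hx']
    | single g a => simp [twistedAntipode_single, mul_assoc, htt, ht', ht]

theorem mul_eq_zero_of_forall_sum_coeff_mul_eq_zero [Fintype G] {t : G} (ht : t * t = 1)
    {f : MonoidAlgebra k G} (hf : IsIdempotentElem f) (hσf : twistedAntipode k t f = f)
    {x : MonoidAlgebra k G}
    (hx : ∀ y, ∑ g, (x * f * of k G t).coeff g * (y * f).coeff g = 0) : x * f = 0 := by
  have hS : of k G t * of k G t = 1 := by simp [single_mul_single, ht, one_def]
  have hSS : ∀ y, of k G t * (of k G t * y) = y := fun y => by rw [← mul_assoc, hS, one_mul]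
  have hanti : antipode k f = of k G t * f * of k G t := by
    conv_rhs => rw [← hσf, twistedAntipode_apply, ← of_apply]
    simp only [mul_assoc, hSS]
    rw [hS, mul_one]
  have h0 : x * f * of k G t * antipode k f = 0 := by
    ext s
    rw [coeff_mul_antipode]
    exact hx (single s 1)
  have h1 : x * f * of k G t = 0 := by
    rw [← h0, hanti]
    simp only [mul_assoc, hSS]
    rw [← mul_assoc f f, hf.eq]
  calc x * f = x * f * of k G t * of k G t := by rw [mul_assoc _ (of k G t), hS, mul_one]
    _ = 0 := by rw [h1, zero_mul]

end MonoidAlgebra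

namespace Representation

variable {k G M : Type*} [CommRing k] [Group G] [AddCommGroup M] [Module k M]
  (ρ : Representation k G M) {t : G} (ht : t * t = 1)
include ht

theorem apply_apply_of_mul_self_eq_one (v : M) : ρ t (ρ t v) = v := by
  rw [← Module.End.mul_apply, ← map_mul, ht, map_one, Module.End.one_apply]

variable {B : M →ₗ[k] M →ₗ[k] k} (hinv : ∀ (g : G) (m₁ m₂ : M), B (ρ g m₁) (ρ g m₂) = B m₁ m₂)
include hinv

theorem isSymm_comp_of_isAlt [CharP k 2] (halt : B.IsAlt) : (B ∘ₗ ρ t).IsSymm := by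
  refine ⟨fun v w => ?_⟩
  calc B (ρ t v) w = B v (ρ t w) := by rw [← hinv t, ρ.apply_apply_of_mul_self_eq_one ht]
    _ = B (ρ t w) v := by rw [← halt.neg, CharTwo.neg_eq]

theorem isAdjointPair_asAlgebraHom_twistedAntipode (x : MonoidAlgebra k G) :
    LinearMap.IsAdjointPair (B ∘ₗ ρ t) (B ∘ₗ ρ t)
      (ρ.asAlgebraHom (MonoidAlgebra.twistedAntipode k t x)) (ρ.asAlgebraHom x) := by
  induction x using MonoidAlgebra.induction_linear with
  | zero => intro v w; simp
  | add x y hx hy => intro v w; simpa using congrArg₂ (· + ·) (hx v w) (hy v w)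
  | single g c =>
    intro v w
    have h := hinv g⁻¹ (ρ t v) (ρ g w)
    simp only [inv_self_apply] at h
    simp [MonoidAlgebra.twistedAntipode_single, Module.End.mul_apply,
      ρ.apply_apply_of_mul_self_eq_one ht, ← h]

end Representation

theorem stmt17_general {k G M : Type*} [Field k] [CharP k 2] [IsAlgClosed k] [Group G] [Fintype G]
    [AddCommGroup M] [Module k M] [FiniteDimensional k M] [Nontrivial M]
    (ρ : Representation k G M)
    (hirr : ∀ N : Submodule k M, (∀ g : G, ∀ m ∈ N, ρ g m ∈ N) → N = ⊥ ∨ N = ⊤)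
    (B : M →ₗ[k] M →ₗ[k] k)
    (halt : ∀ m : M, B m m = 0)
    (hnd : ∀ m : M, (∀ m' : M, B m m' = 0) → m = 0)
    (hinv : ∀ (g : G) (m₁ m₂ : M), B (ρ g m₁) (ρ g m₂) = B m₁ m₂)
    (t : G) (ht : t * t = 1)
    (hBt : ∃ m : M, B (ρ t m) m ≠ 0) :
    ∃ f : MonoidAlgebra k G,
      -- f is a primitive idempotent
      f * f = f ∧ f ≠ 0 ∧
      (∀ e₁ e₂ : MonoidAlgebra k G, e₁ * e₁ = e₁ → e₂ * e₂ = e₂ →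
        e₁ * e₂ = 0 → e₂ * e₁ = 0 → e₁ + e₂ = f → e₁ = 0 ∨ e₂ = 0) ∧
      -- kGf ≅ P(M), i.e. f does not annihilate the simple module M
      (∃ m : M, ρ.asAlgebraHom f m ≠ 0) ∧
      -- B_t is non-degenerate on kGf
      (∀ x : MonoidAlgebra k G,
        (∀ y : MonoidAlgebra k G,
          (∑ g : G, (x * f * MonoidAlgebra.of k G t).coeff g * (y * f).coeff g) = 0) →
        x * f = 0) := by
  set D := B ∘ₗ ρ t
  have hD : D.IsSymm := ρ.isSymm_comp_of_isAlt ht hinv halt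
  have hDsep : D.SeparatingLeft := fun v hv => by
    simpa [ρ.apply_apply_of_mul_self_eq_one ht] using congrArg (ρ t) (hnd _ hv)
  obtain ⟨m₀, hm₀⟩ := hBt
  obtain ⟨m, hm⟩ := LinearMap.exists_apply_self_eq_one (D := D) hm₀
  set p := LinearMap.smulRight (D m) m
  have hpm : p m = m := by simp [p, hm]
  have hm0 : m ≠ 0 := by rintro rfl; simp at hm
  have hp0 : p ≠ 0 := fun h => hm0 (by rw [← hpm, h, LinearMap.zero_apply])
  have hsurj : Function.Surjective ρ.asAlgebraHom :=
    AlgHom.surjective_of_irreducible _ fun N hN => hirr N fun g v hv => by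
      simpa using hN (MonoidAlgebra.single g 1) v hv
  obtain ⟨f, ⟨hf, hf0, hprim⟩, hσf, hφf⟩ := exists_primitive_fixed_idempotent
    (MonoidAlgebra.isAntiInvolution_twistedAntipode ht) ρ.asAlgebraHom
    (LinearMap.isIdempotentElem_smulRight hm) hp0
    (fun T => ⟨_, LinearMap.smulRight_mul_mul_smulRight m T⟩)
    (fun x hx => LinearMap.IsAdjointPair.eq_of_separatingLeft hDsep
      (hx ▸ ρ.isAdjointPair_asAlgebraHom_twistedAntipode ht hinv x)
      (hD.isAdjointPair_smulRight m))
    (hsurj p)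
  exact ⟨f, hf, hf0, hprim, ⟨m, by rwa [hφf, hpm]⟩,
    fun x hx => MonoidAlgebra.mul_eq_zero_of_forall_sum_coeff_mul_eq_zero ht hf hσf hx⟩

/-- If `M` is a non-trivial self-dual irreducible `kG`-module (char 2, k algebraically
closed) with `G`-invariant symplectic form `B`, and `t ∈ G` is an involution with
`B(tm, m) ≠ 0` for some `m`, then there is a primitive idempotent `f ∈ kG` with
`kGf ≅ P(M)` (i.e. `f` acts non-trivially on `M`) such that `B_t(x,y) = B₁(xt,y)` is
non-degenerate on `kGf`. -/
theorem stmt17 {k G M : Type*} [Field k] [CharP k 2] [IsAlgClosed k] [Group G] [Fintype G]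
    [AddCommGroup M] [Module k M] [FiniteDimensional k M] [Nontrivial M]
    (ρ : Representation k G M)
    (hirr : ∀ N : Submodule k M, (∀ g : G, ∀ m ∈ N, ρ g m ∈ N) → N = ⊥ ∨ N = ⊤)
    (hnontriv : ∃ (g : G) (m : M), ρ g m ≠ m)
    (B : M →ₗ[k] M →ₗ[k] k)
    (halt : ∀ m : M, B m m = 0)
    (hnd : ∀ m : M, (∀ m' : M, B m m' = 0) → m = 0)
    (hinv : ∀ (g : G) (m₁ m₂ : M), B (ρ g m₁) (ρ g m₂) = B m₁ m₂)
    (t : G) (ht : t * t = 1) (ht1 : t ≠ 1)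
    (hBt : ∃ m : M, B (ρ t m) m ≠ 0) :
    ∃ f : MonoidAlgebra k G,
      -- f is a primitive idempotent
      f * f = f ∧ f ≠ 0 ∧
      (∀ e₁ e₂ : MonoidAlgebra k G, e₁ * e₁ = e₁ → e₂ * e₂ = e₂ →
        e₁ * e₂ = 0 → e₂ * e₁ = 0 → e₁ + e₂ = f → e₁ = 0 ∨ e₂ = 0) ∧
      -- kGf ≅ P(M), i.e. f does not annihilate the simple module M
      (∃ m : M, ρ.asAlgebraHom f m ≠ 0) ∧
      -- B_t is non-degenerate on kGf
      (∀ x : MonoidAlgebra k G,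
        (∀ y : MonoidAlgebra k G,
          (∑ g : G, (x * f * MonoidAlgebra.of k G t).coeff g * (y * f).coeff g) = 0) →
        x * f = 0) :=
  stmt17_general ρ hirr B halt hnd hinv t ht hBt
end

section
/- Let λ be a non-trivial 2-regular partition of n ≥ 2, S^λ the Specht module over a field k of characteristic 2 with its standard S_n-invariant bilinear form B, T a λ-tableau with polytabloid e_T, and t ∈ S_n the involution reversing the entries in each row of T. Then B(t·e_T, e_T) = 1. -/
open scoped Classical

/-- The tabloid of the tableau `σ ∘ T`: the family of row sets. -/
noncomputable def tabloid18 {n l : ℕ} (lam : Fin l → ℕ)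
    (T : (Σ i : Fin l, Fin (lam i)) ≃ Fin n) (σ : Equiv.Perm (Fin n)) :
    Fin l → Finset (Fin n) :=
  fun i => (Finset.univ.image fun j : Fin (lam i) => T ⟨i, j⟩).image σ

/-- `σ` belongs to the column stabilizer of the tableau `T`. -/
def colStab18 {n l : ℕ} (lam : Fin l → ℕ)
    (T : (Σ i : Fin l, Fin (lam i)) ≃ Fin n) (σ : Equiv.Perm (Fin n)) : Prop :=
  ∀ (i : Fin l) (j : Fin (lam i)), ∃ (i' : Fin l) (j' : Fin (lam i')),
    σ (T ⟨i, j⟩) = T ⟨i', j'⟩ ∧ (j : ℕ) = (j' : ℕ)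

/-- The polytabloid `e_T = ∑_{σ ∈ colStab(T)} sgn(σ) · {σT}` in the module of tabloids. -/
noncomputable def polytabloid18 (k : Type*) [Field k] {n l : ℕ} (lam : Fin l → ℕ)
    (T : (Σ i : Fin l, Fin (lam i)) ≃ Fin n) : (Fin l → Finset (Fin n)) →₀ k :=
  ∑ σ : Equiv.Perm (Fin n),
    if colStab18 lam T σ then
      ((Equiv.Perm.sign σ : ℤ) : k) • Finsupp.single (tabloid18 lam T σ) 1
    else 0

/-- The involution of `Fin n` reversing the entries in each row of the tableau `T`. -/
noncomputable def rowRev18 {n l : ℕ} (lam : Fin l → ℕ)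
    (T : (Σ i : Fin l, Fin (lam i)) ≃ Fin n) : Equiv.Perm (Fin n) :=
  (T.symm.trans (Equiv.sigmaCongrRight fun _ => Fin.revPerm)).trans T

section Aux

variable {n l : ℕ} (lam : Fin l → ℕ) (T : (Σ i : Fin l, Fin (lam i)) ≃ Fin n)

lemma colStab18_one : colStab18 lam T 1 := fun i j => ⟨i, j, rfl, rfl⟩

lemma rowRev18_apply (i : Fin l) (j : Fin (lam i)) :
    rowRev18 lam T (T ⟨i, j⟩) = T ⟨i, j.rev⟩ := by
  simp [rowRev18]

lemma tabloid18_eq (σ : Equiv.Perm (Fin n)) (i : Fin l) :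
    tabloid18 lam T σ i = Finset.univ.image fun j : Fin (lam i) => σ (T ⟨i, j⟩) := by
  rw [tabloid18, Finset.image_image]
  rfl

lemma tabloid18_one_rev (i : Fin l) :
    (tabloid18 lam T 1 i).image (rowRev18 lam T) = tabloid18 lam T 1 i := by
  rw [tabloid18_eq, Finset.image_image]
  ext x
  simp only [Finset.mem_image, Finset.mem_univ, true_and, Function.comp_apply,
    Equiv.Perm.coe_one, id_eq, rowRev18_apply]
  constructor
  · rintro ⟨j, rfl⟩; exact ⟨j.rev, rfl⟩
  · rintro ⟨j, rfl⟩; exact ⟨j.rev, by rw [Fin.rev_rev]⟩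

/-- The key uniqueness lemma: the only pair of column stabilizer elements whose
tabloids match up under row reversal is the identity pair. -/
lemma uniq18 (h2reg : ∀ i j : Fin l, i < j → lam j < lam i)
    (σ τ : Equiv.Perm (Fin n)) (hσ : colStab18 lam T σ) (hτ : colStab18 lam T τ)
    (heq : ∀ i, (tabloid18 lam T σ i).image (rowRev18 lam T) = tabloid18 lam T τ i) :
    σ = 1 ∧ τ = 1 := by
  -- membership description of the row reversals of rows of σ's tabloid
  have hmem : ∀ (i : Fin l) (x : Fin n),
      x ∈ (tabloid18 lam T σ i).image (rowRev18 lam T) ↔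
        ∃ j : Fin (lam i), rowRev18 lam T (σ (T ⟨i, j⟩)) = x := by
    intro i x
    rw [tabloid18_eq, Finset.image_image]
    simp [Function.comp]
  have hmemP : ∀ (ρ : Equiv.Perm (Fin n)) (i : Fin l) (x : Fin n),
      x ∈ tabloid18 lam T ρ i ↔ ∃ j : Fin (lam i), ρ (T ⟨i, j⟩) = x := by
    intro ρ i x
    rw [tabloid18_eq]
    simp
  -- main induction: σ fixes every cell
  have key : ∀ N : ℕ, ∀ i : Fin l, (i : ℕ) = N →
      ∀ j : Fin (lam i), σ (T ⟨i, j⟩) = T ⟨i, j⟩ := by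
    intro N
    induction N using Nat.strong_induction_on with
    | _ N IH =>
      intro i hiN
      -- rows below i are fixed
      have IHrow : ∀ i' : Fin l, i' < i → ∀ j' : Fin (lam i'),
          σ (T ⟨i', j'⟩) = T ⟨i', j'⟩ := by
        intro i' hi' j'
        exact IH i'.1 (by rw [← hiN]; exact hi') i' rfl j'
      -- any cell of row i is sent to a row ≥ i
      have hrow_ge : ∀ (j : Fin (lam i)) (a : Fin l) (b : Fin (lam a)),
          σ (T ⟨i, j⟩) = T ⟨a, b⟩ → i ≤ a := by
        intro j a b hab
        by_contra hlt
        push_neg at hlt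
        have h1 : σ (T ⟨a, b⟩) = T ⟨a, b⟩ := IHrow a hlt b
        have h2 : T ⟨i, j⟩ = T ⟨a, b⟩ := σ.injective (hab.trans h1.symm)
        have h3 : i = a := congrArg Sigma.fst (T.injective h2)
        exact absurd h3.symm (ne_of_lt hlt)
      -- inner induction on column values
      have inner : ∀ M : ℕ, ∀ j : Fin (lam i), (j : ℕ) = M →
          σ (T ⟨i, j⟩) = T ⟨i, j⟩ := by
        intro M
        induction M using Nat.strong_induction_on with
        | _ M IHM =>
          intro j hjM
          have hM : M < lam i := hjM ▸ j.isLt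
          -- the cell in column `lam i - 1 - M`
          have hc : lam i - 1 - M < lam i := by omega
          -- τ's image of that cell lies in the reversed σ-tabloid
          have hy : τ (T ⟨i, ⟨lam i - 1 - M, hc⟩⟩) ∈
              (tabloid18 lam T σ i).image (rowRev18 lam T) := by
            rw [heq i, hmemP τ]
            exact ⟨_, rfl⟩
          rw [hmem] at hy
          obtain ⟨j', hj'⟩ := hy
          obtain ⟨a, b, hab, hbv⟩ := hσ i j'
          obtain ⟨a', b', ha'b', hb'v⟩ := hτ i ⟨lam i - 1 - M, hc⟩
          rw [hab, rowRev18_apply, ha'b'] at hj'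
          have hsig := T.injective hj'
          have haa' : a = a' := congrArg Sigma.fst hsig
          subst haa'
          have hbb' : b.rev = b' := by simpa using hsig
          -- numeric facts
          have hrev : (b.rev : ℕ) = lam a - 1 - (b : ℕ) := by
            rw [Fin.val_rev]; omega
          have hia : i ≤ a := hrow_ge j' a b hab
          have hlam : lam a ≤ lam i := by
            rcases eq_or_lt_of_le hia with h | h
            · rw [← h]
            · exact le_of_lt (h2reg i a h)
          have hbI : (b : ℕ) < lam a := b.isLt
          have hkey : lam a - 1 - (b : ℕ) = lam i - 1 - M := by
            rw [← hrev, hbb']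
            simpa using hb'v.symm
          -- j' ≤ M
          have hj'M : (j' : ℕ) ≤ M := by omega
          rcases lt_or_eq_of_le hj'M with hlt | heqM
          · -- contradiction with inner IH
            have hfix := IHM (j' : ℕ) hlt j' rfl
            rw [hfix] at hab
            have hsig2 := T.injective hab
            have hai : i = a := congrArg Sigma.fst hsig2
            subst hai
            have : (j' : ℕ) = (b : ℕ) := hbv
            omega
          · -- j' = M : conclude
            have hlameq : lam a = lam i := by omega
            have hai : a = i := by
              rcases eq_or_lt_of_le hia with h | h
              · exact h.symm
              · exact absurd (h2reg i a h) (by omega)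
            subst hai
            have hj'j : j' = j := Fin.ext (by omega)
            have hbj : b = j := Fin.ext (by omega)
            rw [← hj'j, hab, hbj, hj'j]
      exact fun j => inner j.1 j rfl
  have hfixσ : ∀ (i : Fin l) (j : Fin (lam i)), σ (T ⟨i, j⟩) = T ⟨i, j⟩ :=
    fun i j => key i.1 i rfl j
  have hσ1 : σ = 1 := Equiv.ext fun x => by
    have hx := hfixσ (T.symm x).1 (T.symm x).2
    rw [Sigma.eta, T.apply_symm_apply] at hx
    simpa using hx
  refine ⟨hσ1, ?_⟩
  -- now τ
  subst hσ1
  have hfixτ : ∀ (i : Fin l) (j : Fin (lam i)), τ (T ⟨i, j⟩) = T ⟨i, j⟩ := by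
    intro i j
    have hrow : tabloid18 lam T τ i = tabloid18 lam T 1 i := by
      rw [← heq i, tabloid18_one_rev]
    have hxmem : τ (T ⟨i, j⟩) ∈ tabloid18 lam T 1 i := by
      rw [← hrow, hmemP τ]; exact ⟨j, rfl⟩
    rw [hmemP 1] at hxmem
    obtain ⟨j'', hj''⟩ := hxmem
    simp only [Equiv.Perm.coe_one, id_eq] at hj''
    obtain ⟨a', b', ha'b', hb'v⟩ := hτ i j
    rw [ha'b'] at hj''
    have hsig := T.injective hj''
    have hai : i = a' := congrArg Sigma.fst hsig
    subst hai
    have hb'' : b' = j := Fin.ext (by omega)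
    rw [ha'b', hb'']
  refine Equiv.ext fun x => ?_
  have hx := hfixτ (T.symm x).1 (T.symm x).2
  rw [Sigma.eta, T.apply_symm_apply] at hx
  simpa using hx

lemma eval_ind {k : Type*} [Field k] {α : Type*} (P : Prop) [Decidable P]
    (c : k) (a D : α) [Decidable (a = D)] :
    (if P then c • Finsupp.single a (1 : k) else 0) D = if P ∧ a = D then c else 0 := by
  classical
  by_cases hP : P <;> by_cases haD : a = D <;>
    simp [hP, haD, Finsupp.single_apply]

lemma ind_sum {k : Type*} [Field k] {α : Type*} [Fintype α] [DecidableEq α]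
    (P Q : Prop) [Decidable P] [Decidable Q] (a b : α) (c d : k) :
    (∑ D : α, (if P ∧ a = D then c else 0) * (if Q ∧ b = D then d else 0)) =
    if P ∧ Q ∧ a = b then c * d else 0 := by
  by_cases hP : P
  · by_cases hQ : Q
    · by_cases hab : a = b
      · subst hab
        simp only [hP, hQ, true_and, and_true, if_true]
        rw [Finset.sum_eq_single a]
        · simp
        · intro D _ hD
          simp [Ne.symm hD]
        · simp
      · simp only [hP, hQ, hab, true_and, and_false, if_false]
        rw [Finset.sum_eq_zero]
        intro D _
        by_cases h1 : a = D <;> by_cases h2 : b = D <;> simp_all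
    · simp [hQ]
  · simp [hP]

end Aux

/-- For a non-trivial 2-regular partition `λ` of `n`, a `λ`-tableau `T` with polytabloid
`e_T`, and `t` the involution reversing the entries in each row of `T`:
`B(t·e_T, e_T) = 1`, where `B` is the standard bilinear form making the tabloids
orthonormal. -/
theorem stmt18 {k : Type*} [Field k] [CharP k 2]
    (n l : ℕ) (hn : 2 ≤ n) (hl : 2 ≤ l) (lam : Fin l → ℕ)
    (hpos : ∀ i, 0 < lam i)
    (h2reg : ∀ i j : Fin l, i < j → lam j < lam i)
    (T : (Σ i : Fin l, Fin (lam i)) ≃ Fin n) :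
    (∑ D : Fin l → Finset (Fin n),
      (Finsupp.mapDomain (fun D' : Fin l → Finset (Fin n) =>
          fun i => (D' i).image (rowRev18 lam T)) (polytabloid18 k lam T)) D *
        (polytabloid18 k lam T) D) = 1 := by
  classical
  set f : (Fin l → Finset (Fin n)) → (Fin l → Finset (Fin n)) :=
    fun D' => fun i => (D' i).image (rowRev18 lam T) with hf
  set c : Equiv.Perm (Fin n) → k := fun σ => ((Equiv.Perm.sign σ : ℤ) : k) with hc
  have hmap : Finsupp.mapDomain f (polytabloid18 k lam T) =
      ∑ σ : Equiv.Perm (Fin n), if colStab18 lam T σ then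
        c σ • Finsupp.single (f (tabloid18 lam T σ)) (1 : k) else 0 := by
    rw [polytabloid18, ← Finsupp.mapDomain.addMonoidHom_apply, map_sum]
    refine Finset.sum_congr rfl fun σ _ => ?_
    rw [Finsupp.mapDomain.addMonoidHom_apply]
    split_ifs
    · rw [Finsupp.mapDomain_smul, Finsupp.mapDomain_single]
    · exact Finsupp.mapDomain_zero
  have hA : ∀ D, Finsupp.mapDomain f (polytabloid18 k lam T) D =
      ∑ σ : Equiv.Perm (Fin n),
        if colStab18 lam T σ ∧ f (tabloid18 lam T σ) = D then c σ else 0 := by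
    intro D
    rw [hmap, Finsupp.finset_sum_apply]
    exact Finset.sum_congr rfl fun σ _ => eval_ind _ _ _ _
  have hB : ∀ D, polytabloid18 k lam T D =
      ∑ τ : Equiv.Perm (Fin n),
        if colStab18 lam T τ ∧ tabloid18 lam T τ = D then c τ else 0 := by
    intro D
    rw [polytabloid18, Finsupp.finset_sum_apply]
    exact Finset.sum_congr rfl fun τ _ => eval_ind _ _ _ _
  calc (∑ D : Fin l → Finset (Fin n),
      Finsupp.mapDomain f (polytabloid18 k lam T) D * polytabloid18 k lam T D)
      = ∑ D : Fin l → Finset (Fin n),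
          ∑ σ : Equiv.Perm (Fin n), ∑ τ : Equiv.Perm (Fin n),
            (if colStab18 lam T σ ∧ f (tabloid18 lam T σ) = D then c σ else 0) *
            (if colStab18 lam T τ ∧ tabloid18 lam T τ = D then c τ else 0) := by
        refine Finset.sum_congr rfl fun D _ => ?_
        rw [hA, hB, Finset.sum_mul_sum]
    _ = ∑ σ : Equiv.Perm (Fin n), ∑ τ : Equiv.Perm (Fin n),
          ∑ D : Fin l → Finset (Fin n),
            (if colStab18 lam T σ ∧ f (tabloid18 lam T σ) = D then c σ else 0) *
            (if colStab18 lam T τ ∧ tabloid18 lam T τ = D then c τ else 0) := by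
        rw [Finset.sum_comm]
        exact Finset.sum_congr rfl fun σ _ => Finset.sum_comm
    _ = ∑ σ : Equiv.Perm (Fin n), ∑ τ : Equiv.Perm (Fin n),
          if colStab18 lam T σ ∧ colStab18 lam T τ ∧
              f (tabloid18 lam T σ) = tabloid18 lam T τ then c σ * c τ else 0 := by
        exact Finset.sum_congr rfl fun σ _ => Finset.sum_congr rfl fun τ _ =>
          ind_sum _ _ _ _ _ _
    _ = ∑ σ : Equiv.Perm (Fin n), ∑ τ : Equiv.Perm (Fin n),
          if σ = 1 ∧ τ = 1 then c σ * c τ else 0 := by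
        refine Finset.sum_congr rfl fun σ _ => Finset.sum_congr rfl fun τ _ => ?_
        refine if_congr ?_ rfl rfl
        constructor
        · rintro ⟨h1, h2, h3⟩
          exact uniq18 lam T h2reg σ τ h1 h2 (fun i => congrFun h3 i)
        · rintro ⟨rfl, rfl⟩
          refine ⟨colStab18_one lam T, colStab18_one lam T, ?_⟩
          funext i
          exact tabloid18_one_rev lam T i
    _ = c 1 * c 1 := by
        rw [Finset.sum_eq_single (1 : Equiv.Perm (Fin n))]
        · rw [Finset.sum_eq_single (1 : Equiv.Perm (Fin n))]
          · simp
          · intro τ _ hτ; simp [hτ]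
          · simp
        · intro σ _ hσ
          rw [Finset.sum_eq_zero]
          intro τ _
          simp [hσ]
        · simp
    _ = 1 := by simp [hc]
end
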